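/- arXiv:2007.07576 — 2 statements merged into one kernel-verified Lean document; each statement's English description precedes it below -/
import Mathlib

section
/- Let N be a weakly connected, forward-backward conflict free Petri net (without self-loops) having at least one proper source place or at least one proper sink place. If the sink marking M_d is reachable from the source marking M₀, then N is acyclic. -/
/-- A Petri net: finite sets of places and transitions, with input and output places
for each transition. -/
structure PetriNet where
  P : Type
  T : Type
  [fintypeP : Fintype P]
  [fintypeT : Fintype T]
  [decEqP : DecidableEq P]
  [decEqT : DecidableEq T]
  inp : T → Finset P
  out : T → Finset P

attribute [instance] PetriNet.fintypeP PetriNet.fintypeT PetriNet.decEqP PetriNet.decEqT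

namespace PetriNet

variable (N : PetriNet)

/-- No place is both an input and an output of the same transition. -/
def NoSelfLoops : Prop := ∀ t, Disjoint (N.inp t) (N.out t)

/-- The input transitions of a place: those of which it is an output. -/
def pIn (p : N.P) : Finset N.T := Finset.univ.filter (fun t => p ∈ N.out t)

/-- The output transitions of a place: those of which it is an input. -/
def pOut (p : N.P) : Finset N.T := Finset.univ.filter (fun t => p ∈ N.inp t)

/-- Forward-backward conflict freeness: every place has at most one input and at most
one output transition. -/
def FBCF : Prop := ∀ p : N.P, (N.pIn p).card ≤ 1 ∧ (N.pOut p).card ≤ 1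

/-- The arcs of the directed graph of the net, on vertices `P ⊕ T`. -/
def arc : (N.P ⊕ N.T) → (N.P ⊕ N.T) → Prop
  | .inl p, .inr t => p ∈ N.inp t
  | .inr t, .inl p => p ∈ N.out t
  | _, _ => False

/-- The net is acyclic: its directed graph has no directed cycle. -/
def Acyclic : Prop := ∀ v, ¬ Relation.TransGen N.arc v v

/-- The underlying undirected graph of the net is connected. -/
def WeaklyConnected : Prop :=
  ∀ v w, Relation.ReflTransGen (fun a b => N.arc a b ∨ N.arc b a) v w

def IsSource (p : N.P) : Prop := N.pIn p = ∅
def IsSink (p : N.P) : Prop := N.pOut p = ∅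
def IsProperSource (p : N.P) : Prop := N.IsSource p ∧ N.pOut p ≠ ∅
def IsProperSink (p : N.P) : Prop := N.IsSink p ∧ N.pIn p ≠ ∅

/-- The source marking: one token in every source place, none elsewhere. -/
def M0 : N.P → ℕ := fun p => if N.pIn p = ∅ then 1 else 0

/-- The sink marking: one token in every sink place, none elsewhere. -/
def Md : N.P → ℕ := fun p => if N.pOut p = ∅ then 1 else 0

/-- A transition is enabled when each of its input places holds a token. -/
def Enabled (M : N.P → ℕ) (t : N.T) : Prop := ∀ p ∈ N.inp t, 1 ≤ M p

/-- The marking obtained by firing a transition. -/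
def fire (M : N.P → ℕ) (t : N.T) : N.P → ℕ :=
  fun p => if p ∈ N.inp t then M p - 1 else if p ∈ N.out t then M p + 1 else M p

/-- `FireSeq M ts M'` holds when successively firing the (enabled) transitions of the
list `ts` transforms the marking `M` into `M'`. -/
inductive FireSeq : (N.P → ℕ) → List N.T → (N.P → ℕ) → Prop
  | nil (M : N.P → ℕ) : FireSeq M [] M
  | cons {M M' : N.P → ℕ} (t : N.T) (ts : List N.T) :
      N.Enabled M t → FireSeq (N.fire M t) ts M' → FireSeq M (t :: ts) M'

/-- Reachability of a marking from another by a firing sequence. -/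
def Reachable (M₀ M : N.P → ℕ) : Prop := ∃ ts, N.FireSeq M₀ ts M


/-!
Count, for every place, the tokens that ever enter it (initial ones plus those produced) and,
for every transition, how often it fires. By the marking equation and conflict freeness these
numbers agree along every arc, so by weak connectivity they are all equal; at a source or a sink
the count is `1`, hence every transition fires exactly once. In a conflict-free net that starts
with no token outside the sources, the producer of a place fires for the first time before its
consumer, so ranking vertices by first firings strictly increases along every arc.
-/

theorem _root_.List.sum_count_cons {α : Type*} [DecidableEq α] (S : Finset α) (a : α) (l : List α) :
    ∑ x ∈ S, (a :: l).count x = ∑ x ∈ S, l.count x + if a ∈ S then 1 else 0 := by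
  simp [List.count_cons, Finset.sum_add_distrib]

variable {N} {M M' : N.P → ℕ} {ts : List N.T} {p : N.P} {t : N.T}

lemma mem_pIn : t ∈ N.pIn p ↔ p ∈ N.out t := by
  simp [pIn]

lemma mem_pOut : t ∈ N.pOut p ↔ p ∈ N.inp t := by
  simp [pOut]

lemma FBCF.pIn_eq_singleton (hfbcf : N.FBCF) (h : p ∈ N.out t) : N.pIn p = {t} :=
  Finset.eq_singleton_iff_unique_mem.mpr
    ⟨mem_pIn.mpr h, fun _ hx => Finset.card_le_one.mp (hfbcf p).1 _ hx _ (mem_pIn.mpr h)⟩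

lemma FBCF.pOut_eq_singleton (hfbcf : N.FBCF) (h : p ∈ N.inp t) : N.pOut p = {t} :=
  Finset.eq_singleton_iff_unique_mem.mpr
    ⟨mem_pOut.mpr h, fun _ hx => Finset.card_le_one.mp (hfbcf p).2 _ hx _ (mem_pOut.mpr h)⟩

lemma M0_eq_zero_of_mem_out (h : p ∈ N.out t) : N.M0 p = 0 :=
  if_neg (Finset.ne_empty_of_mem (mem_pIn.mpr h))

lemma Md_eq_zero_of_mem_inp (h : p ∈ N.inp t) : N.Md p = 0 :=
  if_neg (Finset.ne_empty_of_mem (mem_pOut.mpr h))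

lemma fire_add_ite (hself : N.NoSelfLoops) (hen : N.Enabled M t) (p : N.P) :
    N.fire M t p + (if t ∈ N.pOut p then 1 else 0) = M p + (if t ∈ N.pIn p then 1 else 0) := by
  simp only [fire, mem_pIn, mem_pOut]
  by_cases hin : p ∈ N.inp t
  · have hout : p ∉ N.out t := Finset.disjoint_left.mp (hself t) hin
    have htoken := hen p hin
    simp only [hin, hout, if_true, if_false]
    omega
  · simp only [hin, if_false]
    split_ifs <;> rfl

/-- The marking equation. -/
theorem FireSeq.add_sum_count_pOut (hself : N.NoSelfLoops) (h : N.FireSeq M ts M') (p : N.P) :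
    M' p + ∑ t ∈ N.pOut p, ts.count t = M p + ∑ t ∈ N.pIn p, ts.count t := by
  induction h with
  | nil => simp
  | cons t ts hen _ ih =>
    have hstep := fire_add_ite hself hen p
    rw [List.sum_count_cons, List.sum_count_cons]
    omega

theorem FireSeq.idxOf_lt_idxOf (h : N.FireSeq M ts M') {a b : N.T}
    (hprod : ∀ t, p ∈ N.out t → t = a) (hp : M p = 0) (hb : p ∈ N.inp b) (hbts : b ∈ ts) :
    ts.idxOf a < ts.idxOf b := by
  revert hp hbts
  induction h with
  | nil => simp
  | @cons M₁ _ c ts hen _ ih =>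
    intro hp hbts
    have hpc : p ∉ N.inp c := fun hpc => by simpa [hp] using hen p hpc
    have hcb : c ≠ b := by rintro rfl; exact hpc hb
    rw [List.idxOf_cons_ne _ hcb]
    by_cases hca : c = a
    · subst hca
      rw [List.idxOf_cons_self]
      exact Nat.succ_pos _
    · rw [List.idxOf_cons_ne _ hca]
      have hfire : N.fire M₁ c p = 0 := by simp [fire, hpc, mt (hprod c) hca, hp]
      exact Nat.succ_lt_succ (ih hfire (List.mem_of_ne_of_mem (Ne.symm hcb) hbts))

theorem WeaklyConnected.apply_eq_of_arc {α : Type*} (hconn : N.WeaklyConnected)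
    {f : N.P ⊕ N.T → α} (hf : ∀ a b, N.arc a b → f a = f b) (v w : N.P ⊕ N.T) : f v = f w := by
  have h := Relation.ReflTransGen.lift f (p := Eq)
    (fun a b hab => hab.elim (hf a b) fun hba => (hf b a hba).symm) v w (hconn v w)
  rwa [Relation.reflTransGen_eq_self] at h

theorem acyclic_of_forall_arc_lt {α : Type*} [Preorder α] (f : N.P ⊕ N.T → α)
    (hf : ∀ a b, N.arc a b → f a < f b) : N.Acyclic := fun v hv => by
  have h := Relation.TransGen.lift f hf v v hv
  rw [Relation.transGen_eq_self] at h
  exact lt_irrefl _ h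

/-- The number of tokens that ever enter a place, and the number of firings of a transition. -/
def tokenFlow (ts : List N.T) : N.P ⊕ N.T → ℕ
  | .inl p => N.M0 p + ∑ t ∈ N.pIn p, ts.count t
  | .inr t => ts.count t

theorem tokenFlow_eq_of_arc (hself : N.NoSelfLoops) (hfbcf : N.FBCF)
    (hts : N.FireSeq N.M0 ts N.Md) : ∀ a b, N.arc a b → tokenFlow ts a = tokenFlow ts b
  | .inl p, .inr t, h => by
    have hmark := hts.add_sum_count_pOut hself p
    rw [hfbcf.pOut_eq_singleton h, Finset.sum_singleton, Md_eq_zero_of_mem_inp h] at hmark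
    simp only [tokenFlow]
    omega
  | .inr t, .inl p, h => by
    simp [tokenFlow, hfbcf.pIn_eq_singleton h, M0_eq_zero_of_mem_out h]

theorem count_eq_one_of_fireSeq_M0_Md (hself : N.NoSelfLoops) (hfbcf : N.FBCF)
    (hconn : N.WeaklyConnected) (hts : N.FireSeq N.M0 ts N.Md)
    (hp : N.IsSource p ∨ N.IsSink p) (t : N.T) : ts.count t = 1 := by
  have hflow : tokenFlow ts (.inl p) = 1 := by
    rcases hp with hsrc | hsnk
    · simp [tokenFlow, M0, show N.pIn p = ∅ from hsrc]
    · have hmark := hts.add_sum_count_pOut hself p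
      have hsnk : N.pOut p = ∅ := hsnk
      simp only [Md, hsnk, if_true, Finset.sum_empty] at hmark
      simp only [tokenFlow]
      omega
  exact (hconn.apply_eq_of_arc (tokenFlow_eq_of_arc hself hfbcf hts) (.inr t) (.inl p)).trans hflow

/-- A place is ranked just after its unique producer, or below everything if it has none. -/
def firingRank (ts : List N.T) : N.P ⊕ N.T → ℕ
  | .inl p => ∑ a ∈ N.pIn p, (2 * ts.idxOf a + 3)
  | .inr t => 2 * ts.idxOf t + 2

theorem firingRank_lt_of_arc (hfbcf : N.FBCF) (hts : N.FireSeq N.M0 ts M)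
    (hall : ∀ t, t ∈ ts) : ∀ a b, N.arc a b → firingRank ts a < firingRank ts b
  | .inl p, .inr b, h => by
    rcases (N.pIn p).eq_empty_or_nonempty with hsrc | ⟨a, ha⟩
    · simp [firingRank, hsrc]
    · have hprod := hfbcf.pIn_eq_singleton (mem_pIn.mp ha)
      have hlt := hts.idxOf_lt_idxOf (fun t ht => Finset.mem_singleton.mp (hprod ▸ mem_pIn.mpr ht))
        (M0_eq_zero_of_mem_out (mem_pIn.mp ha)) h (hall b)
      simp only [firingRank, hprod, Finset.sum_singleton]
      omega
  | .inr t, .inl p, h => by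
    simp [firingRank, hfbcf.pIn_eq_singleton h]

/-- Let `N` be a weakly connected, forward-backward conflict free Petri
net (without self-loops) having at least one proper source place or at least one proper
sink place. If the sink marking is reachable from the source marking, then `N` is
acyclic. -/
theorem acyclic_of_sink_reachable_from_source (N : PetriNet)
    (hself : N.NoSelfLoops) (hfbcf : N.FBCF) (hconn : N.WeaklyConnected)
    (hproper : (∃ p, N.IsProperSource p) ∨ (∃ p, N.IsProperSink p))
    (hreach : N.Reachable N.M0 N.Md) :
    N.Acyclic := by
  obtain ⟨ts, hts⟩ := hreach
  obtain ⟨p, hp⟩ : ∃ p, N.IsSource p ∨ N.IsSink p :=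
    hproper.elim (fun ⟨p, hp, _⟩ => ⟨p, .inl hp⟩) (fun ⟨p, hp, _⟩ => ⟨p, .inr hp⟩)
  have hall : ∀ t, t ∈ ts := fun t => List.count_pos_iff.mp <| by
    rw [count_eq_one_of_fireSeq_M0_Md hself hfbcf hconn hts hp t]
    exact Nat.one_pos
  exact acyclic_of_forall_arc_lt _ (firingRank_lt_of_arc hfbcf hts hall)
end PetriNet
end

section
/- Fix transformations φ : F₁ → F₂ and ψ : F₂ → F₃ dinatural in all of their variables, and a morphism f : A → B of B. If (M, L, f) is a labelled marking of the composite graph Γ(ψ) ∘ Γ(φ), t is a transition enabled under M with L(t) = B, M' is the marking obtained from M by firing t, and L' agrees with L except that L'(t) = A, then (M', L', f) is again a labelled marking and ⟨M, L, f⟩ = ⟨M', L', f⟩ as morphisms of C. -/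
open CategoryTheory Opposite

universe v u v' u'

/-- `SignObj B s` is `B` if the sign `s` is `true` (covariant) and `Bᵒᵖ` if `s` is `false`. -/
def SignObj (B : Type u) : Bool → Type u
  | true => B
  | false => Bᵒᵖ

instance signObjCategory (B : Type u) [Category.{v} B] : ∀ s : Bool, Category.{v} (SignObj B s)
  | true => inferInstanceAs (Category.{v} B)
  | false => inferInstanceAs (Category.{v} Bᵒᵖ)

/-- Interpret an object of `B` as an object of `B` or `Bᵒᵖ`, according to a sign. -/
def toSign {B : Type u} : ∀ s : Bool, B → SignObj B s
  | true, X => X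
  | false, X => op X

/-- Forget the sign of an object. -/
def unSign {B : Type u} : ∀ {s : Bool}, SignObj B s → B
  | true, X => X
  | false, X => unop X

/-- A morphism of `B`, pointing in a direction prescribed by a sign. -/
def SignHom {B : Type u} [Category.{v} B] : Bool → B → B → Type v
  | true, X, Y => X ⟶ Y
  | false, X, Y => Y ⟶ X

def toSignHom {B : Type u} [Category.{v} B] : ∀ {s : Bool} {X Y : B},
    SignHom s X Y → (toSign s X ⟶ toSign s Y)
  | true, _, _, f => f
  | false, _, _, f => f.op

def signId {B : Type u} [Category.{v} B] : ∀ (s : Bool) (X : B), SignHom s X X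
  | true, X => 𝟙 X
  | false, X => 𝟙 X

/-- The mixed-variance power category `B^α`. -/
abbrev PowCat (B : Type u) [Category.{v} B] {κ : Type} (α : κ → Bool) : Type u :=
  ∀ j : κ, SignObj B (α j)

/-- The object of `B^α` whose `j`-th entry is `A (σ j)`. -/
abbrev tup {B : Type u} [Category.{v} B] {κ ι : Type} (α : κ → Bool) (σ : κ → ι)
    (A : ι → B) : PowCat B α :=
  fun j => toSign (α j) (A (σ j))

/-- A transformation `φ : F → G` of type `σ, τ`: a family of morphisms
`φ_𝐀 : F (𝐀 σ) ⟶ G (𝐀 τ)` indexed by tuples `𝐀` of objects of `B`. -/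
def Transf {B : Type u} [Category.{v} B] {C : Type u'} [Category.{v'} C] {κa κb ι : Type}
    (α : κa → Bool) (β : κb → Bool) (F : PowCat B α ⥤ C) (G : PowCat B β ⥤ C)
    (σ : κa → ι) (τ : κb → ι) : Type _ :=
  ∀ A : ι → B, F.obj (tup α σ A) ⟶ G.obj (tup β τ A)

/-- The tuple `A` with its `i`-th entry replaced by `X`. -/
abbrev upd {ι : Type} [DecidableEq ι] {B : Type u} (A : ι → B) (i : ι) (X : B) : ι → B :=
  fun k => if k = i then X else A k

/-- The mixed-variance tuple `𝐀[X,Y/i]σ`: entries over the `i`-th variable are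
`e false` in contravariant positions, `e true` in covariant ones. -/
abbrev tupMV {B : Type u} [Category.{v} B] {κ ι : Type} [DecidableEq ι] (α : κ → Bool)
    (σ : κ → ι) (A : ι → B) (i : ι) (e : Bool → B) : PowCat B α :=
  fun j => toSign (α j) (if σ j = i then e (α j) else A (σ j))

def mvHom {B : Type u} [Category.{v} B] {e₁ e₂ : Bool → B}
    (g : e₂ false ⟶ e₁ false) (h : e₁ true ⟶ e₂ true) :
    ∀ s : Bool, SignHom s (e₁ s) (e₂ s)
  | true => h
  | false => g

/-- The canonical morphism `tupMV α σ A i e₁ ⟶ tupMV α σ A i e₂` acting by `h` on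
covariant entries over `i`, (the opposite of) `g` on contravariant entries over `i`, and
the identity elsewhere. -/
def tupMVHom {B : Type u} [Category.{v} B] {κ ι : Type} [DecidableEq ι] (α : κ → Bool)
    (σ : κ → ι) (A : ι → B) (i : ι) (e₁ e₂ : Bool → B)
    (g : e₂ false ⟶ e₁ false) (h : e₁ true ⟶ e₂ true) :
    tupMV α σ A i e₁ ⟶ tupMV α σ A i e₂ :=
  fun j => toSignHom
    (show SignHom (α j) (if σ j = i then e₁ (α j) else A (σ j))
        (if σ j = i then e₂ (α j) else A (σ j)) from
      if hj : σ j = i then by simp only [if_pos hj]; exact mvHom g h (α j)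
      else by simp only [if_neg hj]; exact signId (α j) (A (σ j)))

/-- Dinaturality of a transformation in its `i`-th variable. -/
def DinatAt {B : Type u} [Category.{v} B] {C : Type u'} [Category.{v'} C] {κa κb ι : Type}
    [DecidableEq ι] {α : κa → Bool} {β : κb → Bool} {F : PowCat B α ⥤ C} {G : PowCat B β ⥤ C}
    {σ : κa → ι} {τ : κb → ι} (φ : Transf α β F G σ τ) (i : ι) : Prop :=
  ∀ (A : ι → B) {X Y : B} (f : X ⟶ Y),
    F.map (tupMVHom α σ A i (fun s => bif s then X else Y) (fun _ => X) f (𝟙 X)) ≫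
        φ (upd A i X) ≫
        G.map (tupMVHom β τ A i (fun _ => X) (fun s => bif s then Y else X) (𝟙 X) f) =
      F.map (tupMVHom α σ A i (fun s => bif s then X else Y) (fun _ => Y) (𝟙 Y) f) ≫
        φ (upd A i Y) ≫
        G.map (tupMVHom β τ A i (fun _ => Y) (fun s => bif s then Y else X) f (𝟙 Y))

/-- Vertical composition of transformations along a cocone `ζ, ξ` on their types. -/
def vcomp {B : Type u} [Category.{v} B] {C : Type u'} [Category.{v'} C]
    {κa κb κc ι₁ ι₂ ι : Type} {α : κa → Bool} {β : κb → Bool} {γ : κc → Bool}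
    {F : PowCat B α ⥤ C} {G : PowCat B β ⥤ C} {H : PowCat B γ ⥤ C}
    {σ : κa → ι₁} {τ : κb → ι₁} {η : κb → ι₂} {θ : κc → ι₂}
    (φ : Transf α β F G σ τ) (ψ : Transf β γ G H η θ)
    (ζ : ι₁ → ι) (ξ : ι₂ → ι) (hcomm : ∀ p, ζ (τ p) = ξ (η p)) :
    Transf α γ F H (fun p => ζ (σ p)) (fun p => ξ (θ p)) :=
  fun A =>
    φ (fun x => A (ζ x)) ≫
      eqToHom (congrArg G.obj (by
        funext j
        show toSign (β j) (A (ζ (τ j))) = toSign (β j) (A (ξ (η j)))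
        rw [hcomm j])) ≫
      ψ (fun x => A (ξ x))

section LabelledMarkings

variable {B : Type u} [Category.{v} B] {C : Type u'} [Category.{v'} C]
  {wa wb wc n m : ℕ}

/-- Places of the composite graph `Γ(ψ) ∘ Γ(φ)`: the arguments of the three functors
involved, with the middle ones identified. -/
abbrev CGP (wa wb wc : ℕ) : Type := Fin wa ⊕ (Fin wb ⊕ Fin wc)

/-- Transitions of the composite graph `Γ(ψ) ∘ Γ(φ)`: the variables of `φ` followed by
those of `ψ`. -/
abbrev CGT (n m : ℕ) : Type := Fin n ⊕ Fin m

variable (α : Fin wa → Bool) (β : Fin wb → Bool) (γ : Fin wc → Bool)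
  (σ₁ : Fin wa → Fin n) (τ₁ : Fin wb → Fin n)
  (σ₂ : Fin wb → Fin m) (τ₂ : Fin wc → Fin m)

/-- The (at most one) input transition of each place of the composite graph. -/
def cgIn : CGP wa wb wc → Option (CGT n m)
  | .inl p => bif α p then none else some (.inl (σ₁ p))
  | .inr (.inl p) => some (bif β p then .inl (τ₁ p) else .inr (σ₂ p))
  | .inr (.inr p) => bif γ p then some (.inr (τ₂ p)) else none

/-- The (at most one) output transition of each place of the composite graph. -/
def cgOut : CGP wa wb wc → Option (CGT n m)
  | .inl p => bif α p then some (.inl (σ₁ p)) else none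
  | .inr (.inl p) => some (bif β p then .inr (σ₂ p) else .inl (τ₁ p))
  | .inr (.inr p) => bif γ p then none else some (.inr (τ₂ p))

/-- A transition is enabled when each of its input places carries a token. -/
def cgEnabled (M : CGP wa wb wc → ℕ) (t : CGT n m) : Prop :=
  ∀ p, cgOut α β γ σ₁ τ₁ σ₂ τ₂ p = some t → 1 ≤ M p

/-- Firing a transition of the composite graph. -/
def cgFire (M : CGP wa wb wc → ℕ) (t : CGT n m) : CGP wa wb wc → ℕ :=
  fun p =>
    if cgOut α β γ σ₁ τ₁ σ₂ τ₂ p = some t then M p - 1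
    else if cgIn α β γ σ₁ τ₁ σ₂ τ₂ p = some t then M p + 1
    else M p

/-- Firing sequences of (enabled) transitions on the composite graph. -/
inductive CGFireSeq : (CGP wa wb wc → ℕ) → List (CGT n m) → (CGP wa wb wc → ℕ) → Prop
  | nil (M : CGP wa wb wc → ℕ) : CGFireSeq M [] M
  | cons {M M' : CGP wa wb wc → ℕ} (t : CGT n m) (ts : List (CGT n m)) :
      cgEnabled α β γ σ₁ τ₁ σ₂ τ₂ M t →
      CGFireSeq (cgFire α β γ σ₁ τ₁ σ₂ τ₂ M t) ts M' → CGFireSeq M (t :: ts) M'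

variable {X Y : B}

/-- Interpret a label (`false` for the domain `X`, `true` for the codomain `Y` of the
fixed morphism `f : X ⟶ Y`) as an object of `B`. -/
def Lob (X Y : B) (b : Bool) : B := bif b then Y else X

/-- A labelled marking `(M, L, f)` for the composite graph, for `f : X ⟶ Y`:
`M` is a `{0,1}`-marking and `L` labels each transition with `X` (label `false`) or `Y`
(label `true`), coherently with `M`. -/
structure IsLabelledMarking (X Y : B) (M : CGP wa wb wc → ℕ) (L : CGT n m → Bool) : Prop where
  le_one : ∀ p, M p ≤ 1
  in_label : ∀ p t, M p = 1 → cgIn α β γ σ₁ τ₁ σ₂ τ₂ p = some t → L t = false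
  out_label : ∀ p t, M p = 1 → cgOut α β γ σ₁ τ₁ σ₂ τ₂ p = some t → L t = true
  eq_label : ∀ p t t', M p = 0 → cgIn α β γ σ₁ τ₁ σ₂ τ₂ p = some t →
    cgOut α β γ σ₁ τ₁ σ₂ τ₂ p = some t' → L t = L t'

/-- The tuple of objects (labels) at which the component of `φ` is taken. -/
def L1 (X Y : B) (L : CGT n m → Bool) : Fin n → B := fun t => Lob X Y (L (.inl t))

/-- The tuple of objects (labels) at which the component of `ψ` is taken. -/
def L2 (X Y : B) (L : CGT n m → Bool) : Fin m → B := fun t => Lob X Y (L (.inr t))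

/-- The domain tuple of the morphism associated to a labelled marking: a marked place
contributes `X` covariantly and `Y` contravariantly, an unmarked one the label of its
adjacent transition. -/
def startT (M : CGP wa wb wc → ℕ) (L : CGT n m → Bool) (X Y : B) : PowCat B α :=
  fun j => toSign (α j)
    (if M (.inl j) = 1 then (bif α j then X else Y) else Lob X Y (L (.inl (σ₁ j))))

/-- The codomain tuple of the morphism associated to a labelled marking. -/
def endT (M : CGP wa wb wc → ℕ) (L : CGT n m → Bool) (X Y : B) : PowCat B γ :=
  fun j => toSign (γ j)
    (if M (.inr (.inr j)) = 1 then (bif γ j then Y else X) else Lob X Y (L (.inr (τ₂ j))))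

variable {M : CGP wa wb wc → ℕ} {L : CGT n m → Bool}

/-- The morphism with components `x¹` (the marked-place entries are `f`). -/
def mor1 (hLM : IsLabelledMarking α β γ σ₁ τ₁ σ₂ τ₂ X Y M L) (f : X ⟶ Y) :
    startT α σ₁ M L X Y ⟶ tup α σ₁ (L1 X Y L) :=
  fun j => toSignHom
    (show SignHom (α j)
        (if M (.inl j) = 1 then (bif α j then X else Y) else Lob X Y (L (.inl (σ₁ j))))
        (Lob X Y (L (.inl (σ₁ j)))) from by
      by_cases hM : M (.inl j) = 1
      · simp only [if_pos hM]
        cases hα : α j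
        · have hL : L (.inl (σ₁ j)) = false :=
            hLM.in_label _ _ hM (by simp [cgIn, hα])
          rw [hL]; exact f
        · have hL : L (.inl (σ₁ j)) = true :=
            hLM.out_label _ _ hM (by simp [cgOut, hα])
          rw [hL]; exact f
      · simp only [if_neg hM]
        exact signId (α j) (Lob X Y (L (.inl (σ₁ j)))))

/-- The morphism with components `x²`. -/
def mor2 (hLM : IsLabelledMarking α β γ σ₁ τ₁ σ₂ τ₂ X Y M L) (f : X ⟶ Y) :
    tup β τ₁ (L1 X Y L) ⟶ tup β σ₂ (L2 X Y L) :=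
  fun j => toSignHom
    (show SignHom (β j) (Lob X Y (L (.inl (τ₁ j)))) (Lob X Y (L (.inr (σ₂ j)))) from by
      by_cases hM : M (.inr (.inl j)) = 1
      · cases hβ : β j
        · have h1 : L (.inr (σ₂ j)) = false :=
            hLM.in_label _ _ hM (by simp [cgIn, hβ])
          have h2 : L (.inl (τ₁ j)) = true :=
            hLM.out_label _ _ hM (by simp [cgOut, hβ])
          rw [h1, h2]; exact f
        · have h1 : L (.inl (τ₁ j)) = false :=
            hLM.in_label _ _ hM (by simp [cgIn, hβ])
          have h2 : L (.inr (σ₂ j)) = true :=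
            hLM.out_label _ _ hM (by simp [cgOut, hβ])
          rw [h1, h2]; exact f
      · have hM0 : M (.inr (.inl j)) = 0 := by
          have := hLM.le_one (.inr (.inl j)); omega
        cases hβ : β j
        · have h : L (.inr (σ₂ j)) = L (.inl (τ₁ j)) :=
            hLM.eq_label _ _ _ hM0 (by simp [cgIn, hβ]) (by simp [cgOut, hβ])
          rw [h]; exact signId false (Lob X Y (L (.inl (τ₁ j))))
        · have h : L (.inl (τ₁ j)) = L (.inr (σ₂ j)) :=
            hLM.eq_label _ _ _ hM0 (by simp [cgIn, hβ]) (by simp [cgOut, hβ])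
          rw [h]; exact signId true (Lob X Y (L (.inr (σ₂ j)))))

/-- The morphism with components `x³`. -/
def mor3 (hLM : IsLabelledMarking α β γ σ₁ τ₁ σ₂ τ₂ X Y M L) (f : X ⟶ Y) :
    tup γ τ₂ (L2 X Y L) ⟶ endT γ τ₂ M L X Y :=
  fun j => toSignHom
    (show SignHom (γ j) (Lob X Y (L (.inr (τ₂ j))))
        (if M (.inr (.inr j)) = 1 then (bif γ j then Y else X)
          else Lob X Y (L (.inr (τ₂ j)))) from by
      by_cases hM : M (.inr (.inr j)) = 1
      · simp only [if_pos hM]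
        cases hγ : γ j
        · have hL : L (.inr (τ₂ j)) = true :=
            hLM.out_label _ _ hM (by simp [cgOut, hγ])
          rw [hL]; exact f
        · have hL : L (.inr (τ₂ j)) = false :=
            hLM.in_label _ _ hM (by simp [cgIn, hγ])
          rw [hL]; exact f
      · simp only [if_neg hM]
        exact signId (γ j) (Lob X Y (L (.inr (τ₂ j)))))

variable {F₁ : PowCat B α ⥤ C} {F₂ : PowCat B β ⥤ C} {F₃ : PowCat B γ ⥤ C}

/-- The morphism `⟨M, L, f⟩` of `C` associated to a labelled marking. -/
def interp (φ : Transf α β F₁ F₂ σ₁ τ₁) (ψ : Transf β γ F₂ F₃ σ₂ τ₂)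
    (M : CGP wa wb wc → ℕ) (L : CGT n m → Bool)
    (hLM : IsLabelledMarking α β γ σ₁ τ₁ σ₂ τ₂ X Y M L) (f : X ⟶ Y) :
    F₁.obj (startT α σ₁ M L X Y) ⟶ F₃.obj (endT γ τ₂ M L X Y) :=
  F₁.map (mor1 α β γ σ₁ τ₁ σ₂ τ₂ hLM f) ≫ φ (L1 X Y L) ≫
    F₂.map (mor2 α β γ σ₁ τ₁ σ₂ τ₂ hLM f) ≫ ψ (L2 X Y L) ≫
    F₃.map (mor3 α β γ σ₁ τ₁ σ₂ τ₂ hLM f)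

end LabelledMarkings

section Infra
variable {B : Type u} [Category.{v} B]

theorem toSignHom_heq {s : Bool} {P Q P' Q' : B}
    (hP : P = P') (hQ : Q = Q') {a : SignHom s P Q} {b : SignHom s P' Q'} (hab : HEq a b) :
    HEq (toSignHom a) (toSignHom b) := by
  subst hP; subst hQ; cases hab; rfl

/-- conjugation form for morphisms of `PowCat` from componentwise `HEq`. -/
theorem powcat_conj {κ : Type} {αk : κ → Bool} {P Q P' Q' : PowCat B αk}
    (hP : P = P') (hQ : Q' = Q) (u : P ⟶ Q) (v : P' ⟶ Q')
    (h : ∀ j, HEq (u j) (v j)) :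
    u = eqToHom hP ≫ v ≫ eqToHom hQ := by
  subst hP; subst hQ
  have : u = v := funext fun j => eq_of_heq (h j)
  simp [this]

theorem Transf.congr' {C : Type u'} [Category.{v'} C]
    {κa κb ι : Type} {α : κa → Bool} {β : κb → Bool} {F : PowCat B α ⥤ C} {G : PowCat B β ⥤ C}
    {σ : κa → ι} {τ : κb → ι} (φ : Transf α β F G σ τ) {A₁ A₂ : ι → B} (h : A₁ = A₂) :
    φ A₂ = eqToHom (show F.obj (tup α σ A₂) = F.obj (tup α σ A₁) by rw [h]) ≫ φ A₁ ≫
      eqToHom (show G.obj (tup β τ A₁) = G.obj (tup β τ A₂) by rw [h]) := by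
  subst h; simp
end Infra

section Comps
variable {B : Type u} [Category.{v} B] (X Y : B) (f : X ⟶ Y)

/-- abstract form of a `mor1` component -/
def comp1 (a : ℕ) (b c : Bool)
    (h0 : a = 1 → c = false → b = false) (h1 : a = 1 → c = true → b = true) :
    SignHom c (if a = 1 then (bif c then X else Y) else Lob X Y b) (Lob X Y b) := by
  by_cases hM : a = 1
  · simp only [if_pos hM]
    cases hα : c
    · have hL : b = false := h0 hM hα
      rw [hL]; exact f
    · have hL : b = true := h1 hM hα
      rw [hL]; exact f
  · simp only [if_neg hM]
    exact signId c (Lob X Y b)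

/-- abstract form of a `mor2` component -/
def comp2 (a : ℕ) (b₁ b₂ c : Bool)
    (p1 : a = 1 → c = false → b₂ = false) (p2 : a = 1 → c = false → b₁ = true)
    (p3 : a = 1 → c = true → b₁ = false) (p4 : a = 1 → c = true → b₂ = true)
    (p5 : a ≠ 1 → c = false → b₂ = b₁) (p6 : a ≠ 1 → c = true → b₁ = b₂) :
    SignHom c (Lob X Y b₁) (Lob X Y b₂) := by
  by_cases hM : a = 1
  · cases hβ : c
    · have h1 : b₂ = false := p1 hM hβ
      have h2 : b₁ = true := p2 hM hβ
      rw [h1, h2]; exact f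
    · have h1 : b₁ = false := p3 hM hβ
      have h2 : b₂ = true := p4 hM hβ
      rw [h1, h2]; exact f
  · cases hβ : c
    · have h : b₂ = b₁ := p5 hM hβ
      rw [h]; exact signId false (Lob X Y b₁)
    · have h : b₁ = b₂ := p6 hM hβ
      rw [h]; exact signId true (Lob X Y b₂)

/-- abstract form of a `mor3` component -/
def comp3 (a : ℕ) (b c : Bool)
    (hbt : a = 1 → c = false → b = true) (hbf : a = 1 → c = true → b = false) :
    SignHom c (Lob X Y b)
      (if a = 1 then (bif c then Y else X) else Lob X Y b) := by
  by_cases hM : a = 1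
  · simp only [if_pos hM]
    cases hγ : c
    · have hL : b = true := hbt hM hγ
      rw [hL]; exact f
    · have hL : b = false := hbf hM hγ
      rw [hL]; exact f
  · simp only [if_neg hM]
    exact signId c (Lob X Y b)

/-- abstract form of a `tupMVHom` component -/
def tmvComp (d : Prop) [Decidable d] (c : Bool) (e₁ e₂ : Bool → B) (W : B)
    (g : e₂ false ⟶ e₁ false) (h : e₁ true ⟶ e₂ true) :
    SignHom c (if d then e₁ c else W) (if d then e₂ c else W) :=
  if hj : d then by simp only [if_pos hj]; exact mvHom g h c
  else by simp only [if_neg hj]; exact signId c W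
end Comps

section CompEq
variable {B : Type u} [Category.{v} B] {C : Type u'} [Category.{v'} C]
  {wa wb wc n m : ℕ}
  {α : Fin wa → Bool} {β : Fin wb → Bool} {γ : Fin wc → Bool}
  {σ₁ : Fin wa → Fin n} {τ₁ : Fin wb → Fin n}
  {σ₂ : Fin wb → Fin m} {τ₂ : Fin wc → Fin m}
  {X Y : B} {M : CGP wa wb wc → ℕ} {L : CGT n m → Bool}

theorem mor1_eq (hLM : IsLabelledMarking α β γ σ₁ τ₁ σ₂ τ₂ X Y M L) (f : X ⟶ Y) (j : Fin wa) :
    mor1 α β γ σ₁ τ₁ σ₂ τ₂ hLM f j =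
      toSignHom (comp1 X Y f (M (.inl j)) (L (.inl (σ₁ j))) (α j)
        (fun hM hα => hLM.in_label _ _ hM (by simp [cgIn, hα]))
        (fun hM hα => hLM.out_label _ _ hM (by simp [cgOut, hα]))) := rfl

theorem mor2_eq (hLM : IsLabelledMarking α β γ σ₁ τ₁ σ₂ τ₂ X Y M L) (f : X ⟶ Y) (j : Fin wb) :
    mor2 α β γ σ₁ τ₁ σ₂ τ₂ hLM f j =
      toSignHom (comp2 X Y f (M (.inr (.inl j))) (L (.inl (τ₁ j))) (L (.inr (σ₂ j))) (β j)
        (fun hM hβ => hLM.in_label _ _ hM (by simp [cgIn, hβ]))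
        (fun hM hβ => hLM.out_label _ _ hM (by simp [cgOut, hβ]))
        (fun hM hβ => hLM.in_label _ _ hM (by simp [cgIn, hβ]))
        (fun hM hβ => hLM.out_label _ _ hM (by simp [cgOut, hβ]))
        (fun hM hβ => hLM.eq_label (.inr (.inl j)) _ _
          (by have := hLM.le_one (.inr (.inl j)); omega)
          (by simp [cgIn, hβ]) (by simp [cgOut, hβ]))
        (fun hM hβ => hLM.eq_label (.inr (.inl j)) _ _
          (by have := hLM.le_one (.inr (.inl j)); omega)
          (by simp [cgIn, hβ]) (by simp [cgOut, hβ]))) := rfl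

theorem mor3_eq (hLM : IsLabelledMarking α β γ σ₁ τ₁ σ₂ τ₂ X Y M L) (f : X ⟶ Y) (j : Fin wc) :
    mor3 α β γ σ₁ τ₁ σ₂ τ₂ hLM f j =
      toSignHom (comp3 X Y f (M (.inr (.inr j))) (L (.inr (τ₂ j))) (γ j)
        (fun hM hγ => hLM.out_label _ _ hM (by simp [cgOut, hγ]))
        (fun hM hγ => hLM.in_label _ _ hM (by simp [cgIn, hγ]))) := rfl

theorem tupMVHom_eq {ι : Type} [DecidableEq ι] (σ : Fin wa → ι) (A : ι → B) (i : ι)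
    (e₁ e₂ : Bool → B) (g : e₂ false ⟶ e₁ false) (h : e₁ true ⟶ e₂ true) (j : Fin wa) :
    tupMVHom α σ A i e₁ e₂ g h j =
      toSignHom (tmvComp (σ j = i) (α j) e₁ e₂ (A (σ j)) g h) := rfl
end CompEq

section Evals
variable {B : Type u} [Category.{v} B] (X Y : B) (f : X ⟶ Y)

theorem toSignHom_signId (c : Bool) (W : B) :
    toSignHom (signId c W) = 𝟙 (toSign c W) := by cases c <;> rfl

theorem signId_heq {c : Bool} {W W' : B} (h : W = W') :
    HEq (signId c W) (signId c W') := by subst h; rfl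

theorem comp_heq {D : Type u'} [Category.{v'} D] {P Q R P' Q' R' : D}
    (hP : P = P') (hQ : Q = Q') (hR : R = R')
    {u : P ⟶ Q} {v : Q ⟶ R} {u' : P' ⟶ Q'} {v' : Q' ⟶ R'}
    (hu : HEq u u') (hv : HEq v v') : HEq (u ≫ v) (u' ≫ v') := by
  subst hP; subst hQ; subst hR; cases hu; cases hv; rfl

variable {a a' : ℕ} {b b' b₁ b₂ b₁' b₂' c : Bool}

theorem comp1_heq_f (ha : a = 1) (h0 h1) : HEq (comp1 X Y f a b c h0 h1) f := by
  subst ha; cases c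
  · obtain rfl := h0 rfl rfl; exact HEq.rfl
  · obtain rfl := h1 rfl rfl; exact HEq.rfl

theorem comp1_heq_id (ha : a ≠ 1) (h0 h1) :
    HEq (comp1 X Y f a b c h0 h1) (signId c (Lob X Y b)) := by
  rw [comp1, dif_neg ha]
  simp only [eq_mpr_eq_cast]; exact cast_heq _ _

theorem comp1_congr (ha : a = a') (hb : b = b') (h0 h1 h0' h1') :
    HEq (comp1 X Y f a b c h0 h1) (comp1 X Y f a' b' c h0' h1') := by
  subst ha; subst hb; rfl

theorem comp2_heq_f (ha : a = 1) (p1 p2 p3 p4 p5 p6) :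
    HEq (comp2 X Y f a b₁ b₂ c p1 p2 p3 p4 p5 p6) f := by
  subst ha; cases c
  · obtain rfl := p1 rfl rfl; obtain rfl := p2 rfl rfl; exact HEq.rfl
  · obtain rfl := p3 rfl rfl; obtain rfl := p4 rfl rfl; exact HEq.rfl

theorem comp2_heq_id (ha : a ≠ 1) (hb : b₁ = b₂) (p1 p2 p3 p4 p5 p6) :
    HEq (comp2 X Y f a b₁ b₂ c p1 p2 p3 p4 p5 p6) (signId c (Lob X Y b₁)) := by
  subst hb; rw [comp2, dif_neg ha]
  cases c
  · simp only [eq_mpr_eq_cast]; exact cast_heq _ _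
  · simp only [eq_mpr_eq_cast]; exact cast_heq _ _

theorem comp2_congr (ha : a = a') (hb₁ : b₁ = b₁') (hb₂ : b₂ = b₂') (p1 p2 p3 p4 p5 p6 q1 q2 q3 q4 q5 q6) :
    HEq (comp2 X Y f a b₁ b₂ c p1 p2 p3 p4 p5 p6) (comp2 X Y f a' b₁' b₂' c q1 q2 q3 q4 q5 q6) := by
  subst ha; subst hb₁; subst hb₂; rfl

theorem comp3_heq_f (ha : a = 1) (hbt hbf) : HEq (comp3 X Y f a b c hbt hbf) f := by
  subst ha; cases c
  · obtain rfl := hbt rfl rfl; exact HEq.rfl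
  · obtain rfl := hbf rfl rfl; exact HEq.rfl

theorem comp3_heq_id (ha : a ≠ 1) (hbt hbf) :
    HEq (comp3 X Y f a b c hbt hbf) (signId c (Lob X Y b)) := by
  rw [comp3, dif_neg ha]
  simp only [eq_mpr_eq_cast]; exact cast_heq _ _

theorem comp3_congr (ha : a = a') (hb : b = b') (hbt hbf hbt' hbf') :
    HEq (comp3 X Y f a b c hbt hbf) (comp3 X Y f a' b' c hbt' hbf') := by
  subst ha; subst hb; rfl

theorem tmv_pos {d : Prop} [Decidable d] (hd : d) (e₁ e₂ : Bool → B) (W : B)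
    (g : e₂ false ⟶ e₁ false) (h : e₁ true ⟶ e₂ true) :
    HEq (tmvComp d c e₁ e₂ W g h) (mvHom g h c) := by
  rw [tmvComp, dif_pos hd]
  simp only [eq_mpr_eq_cast]; exact cast_heq _ _

theorem tmv_neg {d : Prop} [Decidable d] (hd : ¬d) (e₁ e₂ : Bool → B) (W : B)
    (g : e₂ false ⟶ e₁ false) (h : e₁ true ⟶ e₂ true) :
    HEq (tmvComp d c e₁ e₂ W g h) (signId c W) := by
  rw [tmvComp, dif_neg hd]
  simp only [eq_mpr_eq_cast]; exact cast_heq _ _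
end Evals

section YZ
variable {B : Type u} [Category.{v} B] (X Y : B) (f : X ⟶ Y)

/-- `y` component (φ-side source decomposition). -/
def yc (a : ℕ) (b c : Bool) (d : Prop) [Decidable d]
    (h0 : a = 1 → c = false → b = false) (h1 : a = 1 → c = true → b = true)
    (keq : d → (if a = 1 then (bif c then X else Y) else Lob X Y b) = (bif c then X else Y)) :
    SignHom c (if a = 1 then (bif c then X else Y) else Lob X Y b)
      (if d then (bif c then X else Y) else Lob X Y b) :=
  if hd : d then by rw [if_pos hd, keq hd]; exact signId c (bif c then X else Y)
  else by rw [if_neg hd]; exact comp1 X Y f a b c h0 h1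

theorem yc_pos {a : ℕ} {b c : Bool} {d : Prop} [Decidable d] (hd : d) (h0 h1 keq) :
    HEq (yc X Y f a b c d h0 h1 keq) (signId c (bif c then X else Y)) := by
  rw [yc, dif_pos hd]
  simp only [eq_mpr_eq_cast]
  exact (cast_heq _ _).trans (cast_heq _ _)

theorem yc_neg {a : ℕ} {b c : Bool} {d : Prop} [Decidable d] (hd : ¬d) (h0 h1 keq) :
    HEq (yc X Y f a b c d h0 h1 keq) (comp1 X Y f a b c h0 h1) := by
  rw [yc, dif_neg hd]
  simp only [eq_mpr_eq_cast]; exact cast_heq _ _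

/-- `z` component (ψ-side target decomposition, for firing a φ-variable). -/
def zc (a : ℕ) (b₁ b₂ c : Bool) (d : Prop) [Decidable d]
    (p1 : a = 1 → c = false → b₂ = false) (p2 : a = 1 → c = false → b₁ = true)
    (p3 : a = 1 → c = true → b₁ = false) (p4 : a = 1 → c = true → b₂ = true)
    (p5 : a ≠ 1 → c = false → b₂ = b₁) (p6 : a ≠ 1 → c = true → b₁ = b₂)
    (keq : d → (bif c then Y else X) = Lob X Y b₂) :
    SignHom c (if d then (bif c then Y else X) else Lob X Y b₁) (Lob X Y b₂) :=
  if hd : d then by rw [if_pos hd, keq hd]; exact signId c (Lob X Y b₂)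
  else by rw [if_neg hd]; exact comp2 X Y f a b₁ b₂ c p1 p2 p3 p4 p5 p6

theorem zc_pos {a : ℕ} {b₁ b₂ c : Bool} {d : Prop} [Decidable d] (hd : d)
    (p1 p2 p3 p4 p5 p6 keq) :
    HEq (zc X Y f a b₁ b₂ c d p1 p2 p3 p4 p5 p6 keq) (signId c (Lob X Y b₂)) := by
  rw [zc, dif_pos hd]
  simp only [eq_mpr_eq_cast]
  exact (cast_heq _ _).trans (cast_heq _ _)

theorem zc_neg {a : ℕ} {b₁ b₂ c : Bool} {d : Prop} [Decidable d] (hd : ¬d)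
    (p1 p2 p3 p4 p5 p6 keq) :
    HEq (zc X Y f a b₁ b₂ c d p1 p2 p3 p4 p5 p6 keq)
      (comp2 X Y f a b₁ b₂ c p1 p2 p3 p4 p5 p6) := by
  rw [zc, dif_neg hd]
  simp only [eq_mpr_eq_cast]; exact cast_heq _ _

/-- `y₂` component (ψ-hexagon source decomposition, for firing a ψ-variable). -/
def yc₂ (a : ℕ) (b₁ b₂ c : Bool) (d : Prop) [Decidable d]
    (p1 : a = 1 → c = false → b₂ = false) (p2 : a = 1 → c = false → b₁ = true)
    (p3 : a = 1 → c = true → b₁ = false) (p4 : a = 1 → c = true → b₂ = true)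
    (p5 : a ≠ 1 → c = false → b₂ = b₁) (p6 : a ≠ 1 → c = true → b₁ = b₂)
    (keq : d → Lob X Y b₁ = (bif c then X else Y)) :
    SignHom c (Lob X Y b₁) (if d then (bif c then X else Y) else Lob X Y b₂) :=
  if hd : d then by rw [if_pos hd, ← keq hd]; exact signId c (Lob X Y b₁)
  else by rw [if_neg hd]; exact comp2 X Y f a b₁ b₂ c p1 p2 p3 p4 p5 p6

theorem yc₂_pos {a : ℕ} {b₁ b₂ c : Bool} {d : Prop} [Decidable d] (hd : d)
    (p1 p2 p3 p4 p5 p6 keq) :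
    HEq (yc₂ X Y f a b₁ b₂ c d p1 p2 p3 p4 p5 p6 keq) (signId c (Lob X Y b₁)) := by
  rw [yc₂, dif_pos hd]
  simp only [eq_mpr_eq_cast]
  exact (cast_heq _ _).trans (cast_heq _ _)

theorem yc₂_neg {a : ℕ} {b₁ b₂ c : Bool} {d : Prop} [Decidable d] (hd : ¬d)
    (p1 p2 p3 p4 p5 p6 keq) :
    HEq (yc₂ X Y f a b₁ b₂ c d p1 p2 p3 p4 p5 p6 keq)
      (comp2 X Y f a b₁ b₂ c p1 p2 p3 p4 p5 p6) := by
  rw [yc₂, dif_neg hd]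
  simp only [eq_mpr_eq_cast]; exact cast_heq _ _

/-- `z₃` component (ψ-hexagon target decomposition). -/
def z₃c (a : ℕ) (b c : Bool) (d : Prop) [Decidable d]
    (hbt : a = 1 → c = false → b = true) (hbf : a = 1 → c = true → b = false)
    (keq : d → (if a = 1 then (bif c then Y else X) else Lob X Y b) = (bif c then Y else X)) :
    SignHom c (if d then (bif c then Y else X) else Lob X Y b)
      (if a = 1 then (bif c then Y else X) else Lob X Y b) :=
  if hd : d then by rw [if_pos hd, keq hd]; exact signId c (bif c then Y else X)
  else by rw [if_neg hd]; exact comp3 X Y f a b c hbt hbf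

theorem z₃c_pos {a : ℕ} {b c : Bool} {d : Prop} [Decidable d] (hd : d) (hbt hbf keq) :
    HEq (z₃c X Y f a b c d hbt hbf keq) (signId c (bif c then Y else X)) := by
  rw [z₃c, dif_pos hd]
  simp only [eq_mpr_eq_cast]
  exact (cast_heq _ _).trans (cast_heq _ _)

theorem z₃c_neg {a : ℕ} {b c : Bool} {d : Prop} [Decidable d] (hd : ¬d) (hbt hbf keq) :
    HEq (z₃c X Y f a b c d hbt hbf keq) (comp3 X Y f a b c hbt hbf) := by
  rw [z₃c, dif_neg hd]
  simp only [eq_mpr_eq_cast]; exact cast_heq _ _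
end YZ

section Cores
variable {B : Type u} [Category.{v} B] (X Y : B) (f : X ⟶ Y)
variable {a a' : ℕ} {b b' b₁ b₂ b₁' b₂' c : Bool} {d : Prop} [Decidable d]

theorem coreA1
    (h0 : a = 1 → c = false → b = false) (h1 : a = 1 → c = true → b = true)
    (keq : d → (if a = 1 then (bif c then X else Y) else Lob X Y b) = (bif c then X else Y))
    (k1 : d → c = true → a = 1) (k0 : d → c = false → a ≠ 1 ∧ b = true) :
    HEq (toSignHom (comp1 X Y f a b c h0 h1))
      (toSignHom (yc X Y f a b c d h0 h1 keq) ≫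
        toSignHom (tmvComp d c (fun s => bif s then X else Y) (fun _ => Y) (Lob X Y b)
          (𝟙 Y) f)) := by
  by_cases hd : d
  · have hv := toSignHom_heq (B := B) (s := c) (keq hd) (if_pos hd) (yc_pos X Y f hd h0 h1 keq)
    have hw := toSignHom_heq (B := B) (s := c) (if_pos hd) (if_pos hd)
      (tmv_pos hd (fun s => bif s then X else Y) (fun _ => Y) (Lob X Y b) (𝟙 Y) f)
    have hc := comp_heq (congrArg (toSign c) (keq hd)) (congrArg (toSign c) (if_pos hd))
      (congrArg (toSign c) (if_pos hd)) hv hw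
    refine HEq.trans ?_ hc.symm
    clear hc hv hw keq
    cases c
    · obtain ⟨ha, hb⟩ := k0 hd rfl
      subst hb
      refine HEq.trans (toSignHom_heq (if_neg ha) rfl (comp1_heq_id X Y f ha h0 h1)) ?_
      exact heq_of_eq (Category.comp_id (𝟙 (op Y))).symm
    · have ha := k1 hd rfl
      obtain hb := h1 ha rfl
      subst hb; subst ha
      refine HEq.trans (toSignHom_heq rfl rfl (comp1_heq_f X Y f rfl h0 h1)) ?_
      refine heq_of_eq ?_
      show f = 𝟙 X ≫ f
      exact (Category.id_comp f).symm
  · have hv := toSignHom_heq (B := B) (s := c) rfl (if_neg hd) (yc_neg X Y f hd h0 h1 keq)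
    have hw := toSignHom_heq (B := B) (s := c) (if_neg hd) (if_neg hd)
      (tmv_neg hd (fun s => bif s then X else Y) (fun _ => Y) (Lob X Y b) (𝟙 Y) f)
    have hc := comp_heq (rfl) (congrArg (toSign c) (if_neg hd))
      (congrArg (toSign c) (if_neg hd)) hv hw
    refine HEq.trans (heq_of_eq ?_) hc.symm
    rw [toSignHom_signId, Category.comp_id]

theorem coreA2
    (p1 : a = 1 → c = false → b₂ = false) (p2 : a = 1 → c = false → b₁ = true)
    (p3 : a = 1 → c = true → b₁ = false) (p4 : a = 1 → c = true → b₂ = true)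
    (p5 : a ≠ 1 → c = false → b₂ = b₁) (p6 : a ≠ 1 → c = true → b₁ = b₂)
    (keq : d → (bif c then Y else X) = Lob X Y b₂)
    (k1 : d → c = true → a ≠ 1 ∧ b₁ = true) (k0 : d → c = false → a = 1) :
    HEq (toSignHom (comp2 X Y f a b₁ b₂ c p1 p2 p3 p4 p5 p6))
      (toSignHom (tmvComp d c (fun _ => Y) (fun s => bif s then Y else X) (Lob X Y b₁)
          f (𝟙 Y)) ≫
        toSignHom (zc X Y f a b₁ b₂ c d p1 p2 p3 p4 p5 p6 keq)) := by
  by_cases hd : d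
  · have hv := toSignHom_heq (B := B) (s := c) (if_pos hd) (if_pos hd)
      (tmv_pos hd (fun _ => Y) (fun s => bif s then Y else X) (Lob X Y b₁) f (𝟙 Y))
    have hw := toSignHom_heq (B := B) (s := c) (if_pos hd) (keq hd).symm
      ((zc_pos X Y f hd p1 p2 p3 p4 p5 p6 keq).trans (signId_heq (keq hd).symm))
    have hc := comp_heq (congrArg (toSign c) (if_pos hd))
      (congrArg (toSign c) (if_pos hd)) (congrArg (toSign c) (keq hd).symm) hv hw
    refine HEq.trans ?_ hc.symm
    clear hc hv hw keq
    cases c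
    · have ha := k0 hd rfl; subst ha
      obtain rfl := p1 rfl rfl; obtain rfl := p2 rfl rfl
      refine HEq.trans (toSignHom_heq rfl rfl (comp2_heq_f X Y f rfl p1 p2 p3 p4 p5 p6)) ?_
      exact heq_of_eq (Category.comp_id f.op).symm
    · obtain ⟨ha, hb₁⟩ := k1 hd rfl
      have hb := p6 ha rfl
      subst hb; subst hb₁
      refine HEq.trans (toSignHom_heq rfl rfl (comp2_heq_id X Y f ha rfl p1 p2 p3 p4 p5 p6)) ?_
      exact heq_of_eq (Category.comp_id (𝟙 Y)).symm
  · have hv := toSignHom_heq (B := B) (s := c) (if_neg hd) (if_neg hd)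
      (tmv_neg hd (fun _ => Y) (fun s => bif s then Y else X) (Lob X Y b₁) f (𝟙 Y))
    have hw := toSignHom_heq (B := B) (s := c) (if_neg hd) rfl
      (zc_neg X Y f hd p1 p2 p3 p4 p5 p6 keq)
    have hc := comp_heq (congrArg (toSign c) (if_neg hd))
      (congrArg (toSign c) (if_neg hd)) rfl hv hw
    refine HEq.trans (heq_of_eq ?_) hc.symm
    rw [toSignHom_signId, Category.id_comp]

theorem coreA3
    (h0 : a = 1 → c = false → b = false) (h1 : a = 1 → c = true → b = true)
    (h0' : a' = 1 → c = false → b' = false) (h1' : a' = 1 → c = true → b' = true)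
    (keq : d → (if a = 1 then (bif c then X else Y) else Lob X Y b) = (bif c then X else Y))
    (hne : ¬d → a' = a ∧ b' = b)
    (k1 : d → c = true → a' ≠ 1 ∧ b' = false)
    (k0 : d → c = false → a' = 1) :
    HEq (toSignHom (comp1 X Y f a' b' c h0' h1'))
      (toSignHom (yc X Y f a b c d h0 h1 keq) ≫
        toSignHom (tmvComp d c (fun s => bif s then X else Y) (fun _ => X) (Lob X Y b)
          f (𝟙 X))) := by
  by_cases hd : d
  · have hv := toSignHom_heq (B := B) (s := c) (keq hd) (if_pos hd) (yc_pos X Y f hd h0 h1 keq)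
    have hw := toSignHom_heq (B := B) (s := c) (if_pos hd) (if_pos hd)
      (tmv_pos hd (fun s => bif s then X else Y) (fun _ => X) (Lob X Y b) f (𝟙 X))
    have hc := comp_heq (congrArg (toSign c) (keq hd)) (congrArg (toSign c) (if_pos hd))
      (congrArg (toSign c) (if_pos hd)) hv hw
    refine HEq.trans ?_ hc.symm
    clear hc hv hw keq
    cases c
    · have ha' := k0 hd rfl
      obtain rfl := h0' ha' rfl
      subst ha'
      refine HEq.trans (toSignHom_heq rfl rfl (comp1_heq_f X Y f rfl h0' h1')) ?_
      exact heq_of_eq (Category.id_comp f.op).symm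
    · obtain ⟨ha', hb'⟩ := k1 hd rfl
      subst hb'
      refine HEq.trans (toSignHom_heq (if_neg ha') rfl (comp1_heq_id X Y f ha' h0' h1')) ?_
      exact heq_of_eq (Category.comp_id (𝟙 X)).symm
  · have hv := toSignHom_heq (B := B) (s := c) rfl (if_neg hd) (yc_neg X Y f hd h0 h1 keq)
    have hw := toSignHom_heq (B := B) (s := c) (if_neg hd) (if_neg hd)
      (tmv_neg hd (fun s => bif s then X else Y) (fun _ => X) (Lob X Y b) f (𝟙 X))
    have hc := comp_heq (rfl) (congrArg (toSign c) (if_neg hd))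
      (congrArg (toSign c) (if_neg hd)) hv hw
    obtain ⟨ha, hb⟩ := hne hd
    subst ha; subst hb
    refine HEq.trans (heq_of_eq ?_) hc.symm
    rw [toSignHom_signId, Category.comp_id]

theorem coreA4
    (p1 : a = 1 → c = false → b₂ = false) (p2 : a = 1 → c = false → b₁ = true)
    (p3 : a = 1 → c = true → b₁ = false) (p4 : a = 1 → c = true → b₂ = true)
    (p5 : a ≠ 1 → c = false → b₂ = b₁) (p6 : a ≠ 1 → c = true → b₁ = b₂)
    (q1 : a' = 1 → c = false → b₂' = false) (q2 : a' = 1 → c = false → b₁' = true)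
    (q3 : a' = 1 → c = true → b₁' = false) (q4 : a' = 1 → c = true → b₂' = true)
    (q5 : a' ≠ 1 → c = false → b₂' = b₁') (q6 : a' ≠ 1 → c = true → b₁' = b₂')
    (keq : d → (bif c then Y else X) = Lob X Y b₂)
    (hne : ¬d → a' = a ∧ b₁' = b₁ ∧ b₂' = b₂)
    (k1 : d → c = true → a' = 1)
    (k0 : d → c = false → a' ≠ 1 ∧ b₁' = false ∧ b₂ = false) :
    HEq (toSignHom (comp2 X Y f a' b₁' b₂' c q1 q2 q3 q4 q5 q6))
      (toSignHom (tmvComp d c (fun _ => X) (fun s => bif s then Y else X) (Lob X Y b₁)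
          (𝟙 X) f) ≫
        toSignHom (zc X Y f a b₁ b₂ c d p1 p2 p3 p4 p5 p6 keq)) := by
  by_cases hd : d
  · have hv := toSignHom_heq (B := B) (s := c) (if_pos hd) (if_pos hd)
      (tmv_pos hd (fun _ => X) (fun s => bif s then Y else X) (Lob X Y b₁) (𝟙 X) f)
    have hw := toSignHom_heq (B := B) (s := c) (if_pos hd) (keq hd).symm
      ((zc_pos X Y f hd p1 p2 p3 p4 p5 p6 keq).trans (signId_heq (keq hd).symm))
    have hc := comp_heq (congrArg (toSign c) (if_pos hd))
      (congrArg (toSign c) (if_pos hd)) (congrArg (toSign c) (keq hd).symm) hv hw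
    refine HEq.trans ?_ hc.symm
    clear hc hv hw keq
    cases c
    · obtain ⟨ha', hb₁', hb₂⟩ := k0 hd rfl
      have hq := q5 ha' rfl
      subst hb₁'
      subst hq
      refine HEq.trans (toSignHom_heq rfl rfl (comp2_heq_id X Y f ha' rfl q1 q2 q3 q4 q5 q6)) ?_
      exact heq_of_eq (Category.comp_id (𝟙 (op X))).symm
    · have ha' := k1 hd rfl
      subst ha'
      obtain rfl := q3 rfl rfl; obtain rfl := q4 rfl rfl
      refine HEq.trans (toSignHom_heq rfl rfl (comp2_heq_f X Y f rfl q1 q2 q3 q4 q5 q6)) ?_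
      exact heq_of_eq (Category.comp_id f).symm
  · have hv := toSignHom_heq (B := B) (s := c) (if_neg hd) (if_neg hd)
      (tmv_neg hd (fun _ => X) (fun s => bif s then Y else X) (Lob X Y b₁) (𝟙 X) f)
    have hw := toSignHom_heq (B := B) (s := c) (if_neg hd) rfl
      (zc_neg X Y f hd p1 p2 p3 p4 p5 p6 keq)
    have hc := comp_heq (congrArg (toSign c) (if_neg hd))
      (congrArg (toSign c) (if_neg hd)) rfl hv hw
    obtain ⟨ha, hb₁, hb₂⟩ := hne hd
    subst ha; subst hb₁; subst hb₂
    refine HEq.trans (heq_of_eq ?_) hc.symm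
    rw [toSignHom_signId, Category.id_comp]

theorem coreB2
    (p1 : a = 1 → c = false → b₂ = false) (p2 : a = 1 → c = false → b₁ = true)
    (p3 : a = 1 → c = true → b₁ = false) (p4 : a = 1 → c = true → b₂ = true)
    (p5 : a ≠ 1 → c = false → b₂ = b₁) (p6 : a ≠ 1 → c = true → b₁ = b₂)
    (keq : d → Lob X Y b₁ = (bif c then X else Y))
    (k1 : d → c = true → a = 1) (k0 : d → c = false → a ≠ 1 ∧ b₂ = true) :
    HEq (toSignHom (comp2 X Y f a b₁ b₂ c p1 p2 p3 p4 p5 p6))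
      (toSignHom (yc₂ X Y f a b₁ b₂ c d p1 p2 p3 p4 p5 p6 keq) ≫
        toSignHom (tmvComp d c (fun s => bif s then X else Y) (fun _ => Y) (Lob X Y b₂)
          (𝟙 Y) f)) := by
  by_cases hd : d
  · have hv := toSignHom_heq (B := B) (s := c) (keq hd) (if_pos hd)
      ((yc₂_pos X Y f hd p1 p2 p3 p4 p5 p6 keq).trans (signId_heq (keq hd)))
    have hw := toSignHom_heq (B := B) (s := c) (if_pos hd) (if_pos hd)
      (tmv_pos hd (fun s => bif s then X else Y) (fun _ => Y) (Lob X Y b₂) (𝟙 Y) f)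
    have hc := comp_heq (congrArg (toSign c) (keq hd)) (congrArg (toSign c) (if_pos hd))
      (congrArg (toSign c) (if_pos hd)) hv hw
    refine HEq.trans ?_ hc.symm
    clear hc hv hw keq
    cases c
    · obtain ⟨ha, hb₂⟩ := k0 hd rfl
      have hb := p5 ha rfl
      subst hb₂; subst hb
      refine HEq.trans (toSignHom_heq rfl rfl (comp2_heq_id X Y f ha rfl p1 p2 p3 p4 p5 p6)) ?_
      exact heq_of_eq (Category.comp_id (𝟙 (op Y))).symm
    · have ha := k1 hd rfl; subst ha
      obtain rfl := p3 rfl rfl; obtain rfl := p4 rfl rfl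
      refine HEq.trans (toSignHom_heq rfl rfl (comp2_heq_f X Y f rfl p1 p2 p3 p4 p5 p6)) ?_
      exact heq_of_eq (Category.id_comp f).symm
  · have hv := toSignHom_heq (B := B) (s := c) rfl (if_neg hd)
      (yc₂_neg X Y f hd p1 p2 p3 p4 p5 p6 keq)
    have hw := toSignHom_heq (B := B) (s := c) (if_neg hd) (if_neg hd)
      (tmv_neg hd (fun s => bif s then X else Y) (fun _ => Y) (Lob X Y b₂) (𝟙 Y) f)
    have hc := comp_heq (rfl) (congrArg (toSign c) (if_neg hd))
      (congrArg (toSign c) (if_neg hd)) hv hw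
    refine HEq.trans (heq_of_eq ?_) hc.symm
    rw [toSignHom_signId, Category.comp_id]

theorem coreB3
    (p1 : a = 1 → c = false → b₂ = false) (p2 : a = 1 → c = false → b₁ = true)
    (p3 : a = 1 → c = true → b₁ = false) (p4 : a = 1 → c = true → b₂ = true)
    (p5 : a ≠ 1 → c = false → b₂ = b₁) (p6 : a ≠ 1 → c = true → b₁ = b₂)
    (q1 : a' = 1 → c = false → b₂' = false) (q2 : a' = 1 → c = false → b₁' = true)
    (q3 : a' = 1 → c = true → b₁' = false) (q4 : a' = 1 → c = true → b₂' = true)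
    (q5 : a' ≠ 1 → c = false → b₂' = b₁') (q6 : a' ≠ 1 → c = true → b₁' = b₂')
    (keq : d → Lob X Y b₁ = (bif c then X else Y))
    (hb₁ : b₁' = b₁)
    (hne : ¬d → a' = a ∧ b₂' = b₂)
    (k1 : d → c = true → a' ≠ 1 ∧ b₁ = false ∧ b₂' = false)
    (k0 : d → c = false → a' = 1) :
    HEq (toSignHom (comp2 X Y f a' b₁' b₂' c q1 q2 q3 q4 q5 q6))
      (toSignHom (yc₂ X Y f a b₁ b₂ c d p1 p2 p3 p4 p5 p6 keq) ≫
        toSignHom (tmvComp d c (fun s => bif s then X else Y) (fun _ => X) (Lob X Y b₂)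
          f (𝟙 X))) := by
  subst hb₁
  by_cases hd : d
  · have hv := toSignHom_heq (B := B) (s := c) (keq hd) (if_pos hd)
      ((yc₂_pos X Y f hd p1 p2 p3 p4 p5 p6 keq).trans (signId_heq (keq hd)))
    have hw := toSignHom_heq (B := B) (s := c) (if_pos hd) (if_pos hd)
      (tmv_pos hd (fun s => bif s then X else Y) (fun _ => X) (Lob X Y b₂) f (𝟙 X))
    have hc := comp_heq (congrArg (toSign c) (keq hd)) (congrArg (toSign c) (if_pos hd))
      (congrArg (toSign c) (if_pos hd)) hv hw
    refine HEq.trans ?_ hc.symm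
    clear hc hv hw keq
    cases c
    · have ha' := k0 hd rfl; subst ha'
      obtain rfl := q1 rfl rfl; obtain rfl := q2 rfl rfl
      refine HEq.trans (toSignHom_heq rfl rfl (comp2_heq_f X Y f rfl q1 q2 q3 q4 q5 q6)) ?_
      exact heq_of_eq (Category.id_comp f.op).symm
    · obtain ⟨ha', hb₁, hb₂'⟩ := k1 hd rfl
      subst hb₁; subst hb₂'
      refine HEq.trans (toSignHom_heq rfl rfl (comp2_heq_id X Y f ha' rfl q1 q2 q3 q4 q5 q6)) ?_
      exact heq_of_eq (Category.comp_id (𝟙 X)).symm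
  · have hv := toSignHom_heq (B := B) (s := c) rfl (if_neg hd)
      (yc₂_neg X Y f hd p1 p2 p3 p4 p5 p6 keq)
    have hw := toSignHom_heq (B := B) (s := c) (if_neg hd) (if_neg hd)
      (tmv_neg hd (fun s => bif s then X else Y) (fun _ => X) (Lob X Y b₂) f (𝟙 X))
    have hc := comp_heq (rfl) (congrArg (toSign c) (if_neg hd))
      (congrArg (toSign c) (if_neg hd)) hv hw
    obtain ⟨ha, hb₂⟩ := hne hd
    subst ha; subst hb₂
    refine HEq.trans (heq_of_eq ?_) hc.symm
    rw [toSignHom_signId, Category.comp_id]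

theorem coreB4
    (hbt : a = 1 → c = false → b = true) (hbf : a = 1 → c = true → b = false)
    (keqz : d → (if a = 1 then (bif c then Y else X) else Lob X Y b) = (bif c then Y else X))
    (k1 : d → c = true → a ≠ 1 ∧ b = true) (k0 : d → c = false → a = 1) :
    HEq (toSignHom (comp3 X Y f a b c hbt hbf))
      (toSignHom (tmvComp d c (fun _ => Y) (fun s => bif s then Y else X) (Lob X Y b)
          f (𝟙 Y)) ≫
        toSignHom (z₃c X Y f a b c d hbt hbf keqz)) := by
  by_cases hd : d
  · have hv := toSignHom_heq (B := B) (s := c) (if_pos hd) (if_pos hd)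
      (tmv_pos hd (fun _ => Y) (fun s => bif s then Y else X) (Lob X Y b) f (𝟙 Y))
    have hw := toSignHom_heq (B := B) (s := c) (if_pos hd) (keqz hd)
      (z₃c_pos X Y f hd hbt hbf keqz)
    have hc := comp_heq (congrArg (toSign c) (if_pos hd)) (congrArg (toSign c) (if_pos hd))
      (congrArg (toSign c) (keqz hd)) hv hw
    refine HEq.trans ?_ hc.symm
    clear hc hv hw keqz
    cases c
    · have ha := k0 hd rfl; subst ha
      obtain rfl := hbt rfl rfl
      refine HEq.trans (toSignHom_heq rfl rfl (comp3_heq_f X Y f rfl hbt hbf)) ?_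
      exact heq_of_eq (Category.comp_id f.op).symm
    · obtain ⟨ha, hb⟩ := k1 hd rfl
      subst hb
      refine HEq.trans (toSignHom_heq rfl (if_neg ha) (comp3_heq_id X Y f ha hbt hbf)) ?_
      exact heq_of_eq (Category.comp_id (𝟙 Y)).symm
  · have hv := toSignHom_heq (B := B) (s := c) (if_neg hd) (if_neg hd)
      (tmv_neg hd (fun _ => Y) (fun s => bif s then Y else X) (Lob X Y b) f (𝟙 Y))
    have hw := toSignHom_heq (B := B) (s := c) (if_neg hd) rfl
      (z₃c_neg X Y f hd hbt hbf keqz)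
    have hc := comp_heq (congrArg (toSign c) (if_neg hd))
      (congrArg (toSign c) (if_neg hd)) rfl hv hw
    refine HEq.trans (heq_of_eq ?_) hc.symm
    rw [toSignHom_signId, Category.id_comp]

theorem coreB5
    (hbt : a = 1 → c = false → b = true) (hbf : a = 1 → c = true → b = false)
    (hbt' : a' = 1 → c = false → b' = true) (hbf' : a' = 1 → c = true → b' = false)
    (keqz : d → (if a = 1 then (bif c then Y else X) else Lob X Y b) = (bif c then Y else X))
    (hne : ¬d → a' = a ∧ b' = b)
    (k1 : d → c = true → a' = 1) (k0 : d → c = false → a' ≠ 1 ∧ b' = false) :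
    HEq (toSignHom (comp3 X Y f a' b' c hbt' hbf'))
      (toSignHom (tmvComp d c (fun _ => X) (fun s => bif s then Y else X) (Lob X Y b)
          (𝟙 X) f) ≫
        toSignHom (z₃c X Y f a b c d hbt hbf keqz)) := by
  by_cases hd : d
  · have hv := toSignHom_heq (B := B) (s := c) (if_pos hd) (if_pos hd)
      (tmv_pos hd (fun _ => X) (fun s => bif s then Y else X) (Lob X Y b) (𝟙 X) f)
    have hw := toSignHom_heq (B := B) (s := c) (if_pos hd) (keqz hd)
      (z₃c_pos X Y f hd hbt hbf keqz)
    have hc := comp_heq (congrArg (toSign c) (if_pos hd)) (congrArg (toSign c) (if_pos hd))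
      (congrArg (toSign c) (keqz hd)) hv hw
    refine HEq.trans ?_ hc.symm
    clear hc hv hw keqz
    cases c
    · obtain ⟨ha', hb'⟩ := k0 hd rfl
      subst hb'
      refine HEq.trans (toSignHom_heq rfl (if_neg ha') (comp3_heq_id X Y f ha' hbt' hbf')) ?_
      exact heq_of_eq (Category.comp_id (𝟙 (op X))).symm
    · have ha' := k1 hd rfl; subst ha'
      obtain rfl := hbf' rfl rfl
      refine HEq.trans (toSignHom_heq rfl rfl (comp3_heq_f X Y f rfl hbt' hbf')) ?_
      exact heq_of_eq (Category.comp_id f).symm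
  · have hv := toSignHom_heq (B := B) (s := c) (if_neg hd) (if_neg hd)
      (tmv_neg hd (fun _ => X) (fun s => bif s then Y else X) (Lob X Y b) (𝟙 X) f)
    have hw := toSignHom_heq (B := B) (s := c) (if_neg hd) rfl
      (z₃c_neg X Y f hd hbt hbf keqz)
    have hc := comp_heq (congrArg (toSign c) (if_neg hd))
      (congrArg (toSign c) (if_neg hd)) rfl hv hw
    obtain ⟨ha, hb⟩ := hne hd
    subst ha; subst hb
    refine HEq.trans (heq_of_eq ?_) hc.symm
    rw [toSignHom_signId, Category.id_comp]
end Cores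

set_option maxHeartbeats 1000000 in
/-- Let `φ : F₁ → F₂`, `ψ : F₂ → F₃` be transformations dinatural in all
their variables and `f : X ⟶ Y` a morphism.  If `(M, L, f)` is a labelled marking of the
composite graph `Γ(ψ) ∘ Γ(φ)`, `t` is a transition enabled under `M` with label `Y`,
`M'` is obtained from `M` by firing `t` and `L'` agrees with `L` except that
`L' t = X`, then `(M', L', f)` is again a labelled marking and
`⟨M, L, f⟩ = ⟨M', L', f⟩` as morphisms of `C`. -/
theorem labelled_marking_fire
    {B : Type u} [Category.{v} B] {C : Type u'} [Category.{v'} C]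
    {wa wb wc n m : ℕ}
    {α : Fin wa → Bool} {β : Fin wb → Bool} {γ : Fin wc → Bool}
    {σ₁ : Fin wa → Fin n} {τ₁ : Fin wb → Fin n}
    {σ₂ : Fin wb → Fin m} {τ₂ : Fin wc → Fin m}
    {F₁ : PowCat B α ⥤ C} {F₂ : PowCat B β ⥤ C} {F₃ : PowCat B γ ⥤ C}
    (φ : Transf α β F₁ F₂ σ₁ τ₁) (ψ : Transf β γ F₂ F₃ σ₂ τ₂)
    (hφ : ∀ x, DinatAt φ x) (hψ : ∀ x, DinatAt ψ x)
    {X Y : B} (f : X ⟶ Y)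
    (M : CGP wa wb wc → ℕ) (L : CGT n m → Bool)
    (hLM : IsLabelledMarking α β γ σ₁ τ₁ σ₂ τ₂ X Y M L)
    (t : CGT n m) (ht : cgEnabled α β γ σ₁ τ₁ σ₂ τ₂ M t) (hLt : L t = true) :
    ∃ (hLM' : IsLabelledMarking α β γ σ₁ τ₁ σ₂ τ₂ X Y
        (cgFire α β γ σ₁ τ₁ σ₂ τ₂ M t) (fun s => if s = t then false else L s))
      (e₁ : startT α σ₁ M L X Y =
        startT α σ₁ (cgFire α β γ σ₁ τ₁ σ₂ τ₂ M t) (fun s => if s = t then false else L s) X Y)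
      (e₂ : endT γ τ₂ M L X Y =
        endT γ τ₂ (cgFire α β γ σ₁ τ₁ σ₂ τ₂ M t) (fun s => if s = t then false else L s) X Y),
      interp α β γ σ₁ τ₁ σ₂ τ₂ φ ψ M L hLM f =
        eqToHom (congrArg F₁.obj e₁) ≫
          interp α β γ σ₁ τ₁ σ₂ τ₂ φ ψ (cgFire α β γ σ₁ τ₁ σ₂ τ₂ M t)
            (fun s => if s = t then false else L s) hLM' f ≫
          eqToHom (congrArg F₃.obj e₂).symm := by
  rcases t with i | i
  · -- firing a variable of φ
    set M' := cgFire α β γ σ₁ τ₁ σ₂ τ₂ M (.inl i) with hM'def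
    set L' : CGT n m → Bool := fun s => if s = Sum.inl i then false else L s with hL'def
    -- basic facts about the old marking
    have FA1 : ∀ j, σ₁ j = i → α j = true → M (.inl j) = 1 := fun j hj hα =>
      le_antisymm (hLM.le_one _) (ht (.inl j) (by simp [cgOut, hα, hj]))
    have FA0 : ∀ j, σ₁ j = i → α j = false → M (.inl j) ≠ 1 := fun j hj hα hM => by
      have := hLM.in_label (.inl j) (.inl i) hM (by simp [cgIn, hα, hj])
      simp [this] at hLt
    have FB1 : ∀ j, τ₁ j = i → β j = false → M (.inr (.inl j)) = 1 := fun j hj hβ =>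
      le_antisymm (hLM.le_one _) (ht (.inr (.inl j)) (by simp [cgOut, hβ, hj]))
    have FB0 : ∀ j, τ₁ j = i → β j = true → M (.inr (.inl j)) ≠ 1 := fun j hj hβ hM => by
      have := hLM.in_label (.inr (.inl j)) (.inl i) hM (by simp [cgIn, hβ, hj])
      simp [this] at hLt
    have LB1 : ∀ j, τ₁ j = i → β j = true → L (.inr (σ₂ j)) = true := fun j hj hβ => by
      have h0 : M (.inr (.inl j)) = 0 := by
        have := hLM.le_one (.inr (.inl j)); have := FB0 j hj hβ; omega
      have := hLM.eq_label (.inr (.inl j)) (.inl (τ₁ j)) (.inr (σ₂ j)) h0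
        (by simp [cgIn, hβ]) (by simp [cgOut, hβ])
      rw [← this, hj, hLt]
    have LB0 : ∀ j, τ₁ j = i → β j = false → L (.inr (σ₂ j)) = false := fun j hj hβ =>
      hLM.in_label (.inr (.inl j)) (.inr (σ₂ j)) (FB1 j hj hβ) (by simp [cgIn, hβ])
    -- the new marking, computed
    have G1 : ∀ j, σ₁ j ≠ i → M' (.inl j) = M (.inl j) := fun j hj => by
      rcases hα : α j <;>
        simp [hM'def, cgFire, cgOut, cgIn, hα, hj]
    have G2 : ∀ j, σ₁ j = i → α j = true → M' (.inl j) = 0 := fun j hj hα => by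
      simp [hM'def, cgFire, cgOut, cgIn, hα, hj, FA1 j hj hα]
    have G3 : ∀ j, σ₁ j = i → α j = false → M' (.inl j) = 1 := fun j hj hα => by
      have h0 : M (.inl j) = 0 := by
        have := hLM.le_one (.inl j); have := FA0 j hj hα; omega
      simp [hM'def, cgFire, cgOut, cgIn, hα, hj, h0]
    have G4 : ∀ j, τ₁ j ≠ i → M' (.inr (.inl j)) = M (.inr (.inl j)) := fun j hj => by
      rcases hβ : β j <;>
        simp [hM'def, cgFire, cgOut, cgIn, hβ, hj]
    have G5 : ∀ j, τ₁ j = i → β j = true → M' (.inr (.inl j)) = 1 := fun j hj hβ => by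
      have h0 : M (.inr (.inl j)) = 0 := by
        have := hLM.le_one (.inr (.inl j)); have := FB0 j hj hβ; omega
      simp [hM'def, cgFire, cgOut, cgIn, hβ, hj, h0]
    have G6 : ∀ j, τ₁ j = i → β j = false → M' (.inr (.inl j)) = 0 := fun j hj hβ => by
      simp [hM'def, cgFire, cgOut, cgIn, hβ, hj, FB1 j hj hβ]
    have G7 : ∀ j, M' (.inr (.inr j)) = M (.inr (.inr j)) := fun j => by
      rcases hγ : γ j <;>
        simp [hM'def, cgFire, cgOut, cgIn, hγ]
    -- labels
    have hL'i : L' (.inl i) = false := by simp [hL'def]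
    have hL'ne : ∀ k, k ≠ i → L' (.inl k) = L (.inl k) := fun k hk => by
      simp [hL'def, hk]
    have hL'inr : ∀ k, L' (.inr k) = L (.inr k) := fun k => by simp [hL'def]
    -- the new labelled marking
    have hLM' : IsLabelledMarking α β γ σ₁ τ₁ σ₂ τ₂ X Y M' L' := by
      constructor
      · rintro (j | j | j)
        · by_cases hj : σ₁ j = i
          · rcases hα : α j
            · rw [G3 j hj hα]
            · rw [G2 j hj hα]; omega
          · rw [G1 j hj]; exact hLM.le_one _
        · by_cases hj : τ₁ j = i
          · rcases hβ : β j
            · rw [G6 j hj hβ]; omega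
            · rw [G5 j hj hβ]
          · rw [G4 j hj]; exact hLM.le_one _
        · rw [G7 j]; exact hLM.le_one _
      · rintro (j | j | j) t' hM hin
        · rcases hα : α j
          · rw [cgIn] at hin; rw [hα] at hin
            simp only [cond_false, Option.some.injEq] at hin
            subst hin
            by_cases hj : σ₁ j = i
            · simp [hL'def, hj]
            · rw [hL'ne _ hj]
              exact hLM.in_label (.inl j) _ (by rw [← G1 j hj]; exact hM) (by simp [cgIn, hα])
          · rw [cgIn, hα] at hin; simp at hin
        · rw [cgIn] at hin
          rcases hβ : β j
          · rw [hβ] at hin; simp only [cond_false, Option.some.injEq] at hin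
            subst hin
            by_cases hj : τ₁ j = i
            · exact absurd hM (by rw [G6 j hj hβ]; omega)
            · rw [hL'inr]
              exact hLM.in_label (.inr (.inl j)) _ (by rw [← G4 j hj]; exact hM)
                (by simp [cgIn, hβ])
          · rw [hβ] at hin; simp only [cond_true, Option.some.injEq] at hin
            subst hin
            by_cases hj : τ₁ j = i
            · simp [hL'def, hj]
            · rw [hL'ne _ hj]
              exact hLM.in_label (.inr (.inl j)) _ (by rw [← G4 j hj]; exact hM)
                (by simp [cgIn, hβ])
        · rcases hγ : γ j
          · rw [cgIn, hγ] at hin; simp at hin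
          · rw [cgIn, hγ] at hin; simp only [cond_true, Option.some.injEq] at hin
            subst hin
            rw [hL'inr]
            exact hLM.in_label (.inr (.inr j)) _ (by rw [← G7 j]; exact hM)
              (by simp [cgIn, hγ])
      · rintro (j | j | j) t' hM hout
        · rcases hα : α j
          · rw [cgOut, hα] at hout; simp at hout
          · rw [cgOut, hα] at hout; simp only [cond_true, Option.some.injEq] at hout
            subst hout
            by_cases hj : σ₁ j = i
            · exact absurd hM (by rw [G2 j hj hα]; omega)
            · rw [hL'ne _ hj]
              exact hLM.out_label (.inl j) _ (by rw [← G1 j hj]; exact hM)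
                (by simp [cgOut, hα])
        · rw [cgOut] at hout
          rcases hβ : β j
          · rw [hβ] at hout; simp only [cond_false, Option.some.injEq] at hout
            subst hout
            by_cases hj : τ₁ j = i
            · exact absurd hM (by rw [G6 j hj hβ]; omega)
            · rw [hL'ne _ hj]
              exact hLM.out_label (.inr (.inl j)) _ (by rw [← G4 j hj]; exact hM)
                (by simp [cgOut, hβ])
          · rw [hβ] at hout; simp only [cond_true, Option.some.injEq] at hout
            subst hout
            rw [hL'inr]
            by_cases hj : τ₁ j = i
            · exact LB1 j hj hβ
            · exact hLM.out_label (.inr (.inl j)) _ (by rw [← G4 j hj]; exact hM)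
                (by simp [cgOut, hβ])
        · rcases hγ : γ j
          · rw [cgOut, hγ] at hout; simp only [cond_false, Option.some.injEq] at hout
            subst hout
            rw [hL'inr]
            exact hLM.out_label (.inr (.inr j)) _ (by rw [← G7 j]; exact hM)
              (by simp [cgOut, hγ])
          · rw [cgOut, hγ] at hout; simp at hout
      · rintro (j | j | j) t' t'' hM hin hout
        · rcases hα : α j
          · rw [cgOut, hα] at hout; simp at hout
          · rw [cgIn, hα] at hin; simp at hin
        · rw [cgIn] at hin; rw [cgOut] at hout
          rcases hβ : β j
          · rw [hβ] at hin hout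
            simp only [cond_false, Option.some.injEq] at hin hout
            subst hin; subst hout
            by_cases hj : τ₁ j = i
            · rw [hL'inr, hL'def]
              simp only [hj, if_pos rfl]
              exact LB0 j hj hβ
            · rw [hL'inr, hL'ne _ hj]
              exact hLM.eq_label (.inr (.inl j)) _ _ (by rw [← G4 j hj]; exact hM)
                (by simp [cgIn, hβ]) (by simp [cgOut, hβ])
          · rw [hβ] at hin hout
            simp only [cond_true, Option.some.injEq] at hin hout
            subst hin; subst hout
            by_cases hj : τ₁ j = i
            · exact absurd hM (by rw [G5 j hj hβ]; omega)
            · rw [hL'inr, hL'ne _ hj]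
              exact hLM.eq_label (.inr (.inl j)) _ _ (by rw [← G4 j hj]; exact hM)
                (by simp [cgIn, hβ]) (by simp [cgOut, hβ])
        · rcases hγ : γ j
          · rw [cgIn, hγ] at hin; simp at hin
          · rw [cgOut, hγ] at hout; simp at hout
    have e₁ : startT α σ₁ M L X Y = startT α σ₁ M' L' X Y := by
      funext j
      refine congrArg (toSign (α j)) ?_
      by_cases hj : σ₁ j = i
      · rcases hα : α j
        · rw [if_neg (FA0 j hj hα), if_pos (G3 j hj hα), hj, hLt]
          rfl
        · rw [if_pos (FA1 j hj hα), if_neg (by rw [G2 j hj hα]; omega), hj, hL'i]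
          rfl
      · rw [G1 j hj, hL'ne _ hj]
    have e₂ : endT γ τ₂ M L X Y = endT γ τ₂ M' L' X Y := by
      funext j
      refine congrArg (toSign (γ j)) ?_
      rw [G7 j, hL'inr]
    refine ⟨hLM', e₁, e₂, ?_⟩
    have hL2 : L2 X Y L' = L2 X Y L := funext fun k => by simp [L2, hL'def]
    have hAY : upd (L1 X Y L) i Y = L1 X Y L := funext fun k => by
      by_cases hk : k = i
      · simp [upd, hk, L1, hLt, Lob]
      · simp [upd, hk]
    have hAX : upd (L1 X Y L) i X = L1 X Y L' := funext fun k => by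
      by_cases hk : k = i
      · simp [upd, hk, L1, hL'def, Lob]
      · simp [upd, hk, L1, hL'def]
    have keqy : ∀ j, σ₁ j = i →
        (if M (.inl j) = 1 then (bif α j then X else Y)
          else Lob X Y (L (.inl (σ₁ j)))) = (bif α j then X else Y) := fun j hj => by
      rcases hα : α j
      · rw [if_neg (FA0 j hj hα), hj, hLt]; rfl
      · rw [if_pos (FA1 j hj hα)]
    have keqz : ∀ j, τ₁ j = i →
        (bif β j then Y else X) = Lob X Y (L (.inr (σ₂ j))) := fun j hj => by
      rcases hβ : β j
      · rw [LB0 j hj hβ]; rfl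
      · rw [LB1 j hj hβ]; rfl
    let y : startT α σ₁ M L X Y ⟶ tupMV α σ₁ (L1 X Y L) i (fun s => bif s then X else Y) :=
      fun j => toSignHom (yc X Y f (M (.inl j)) (L (.inl (σ₁ j))) (α j) (σ₁ j = i)
        (fun hM hα => hLM.in_label _ _ hM (by simp [cgIn, hα]))
        (fun hM hα => hLM.out_label _ _ hM (by simp [cgOut, hα]))
        (keqy j))
    let z : tupMV β τ₁ (L1 X Y L) i (fun s => bif s then Y else X) ⟶ tup β σ₂ (L2 X Y L) :=
      fun j => toSignHom (zc X Y f (M (.inr (.inl j))) (L (.inl (τ₁ j))) (L (.inr (σ₂ j)))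
        (β j) (τ₁ j = i)
        (fun hM hβ => hLM.in_label _ _ hM (by simp [cgIn, hβ]))
        (fun hM hβ => hLM.out_label _ _ hM (by simp [cgOut, hβ]))
        (fun hM hβ => hLM.in_label _ _ hM (by simp [cgIn, hβ]))
        (fun hM hβ => hLM.out_label _ _ hM (by simp [cgOut, hβ]))
        (fun hM hβ => hLM.eq_label (.inr (.inl j)) _ _
          (by have := hLM.le_one (.inr (.inl j)); omega)
          (by simp [cgIn, hβ]) (by simp [cgOut, hβ]))
        (fun hM hβ => hLM.eq_label (.inr (.inl j)) _ _
          (by have := hLM.le_one (.inr (.inl j)); omega)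
          (by simp [cgIn, hβ]) (by simp [cgOut, hβ]))
        (keqz j))
    have hBY : tupMV α σ₁ (L1 X Y L) i (fun _ => Y) = tup α σ₁ (L1 X Y L) :=
      congrArg (tup α σ₁) hAY
    have hBX : tupMV α σ₁ (L1 X Y L) i (fun _ => X) = tup α σ₁ (L1 X Y L') :=
      congrArg (tup α σ₁) hAX
    have hBY' : tup β τ₁ (L1 X Y L) = tupMV β τ₁ (L1 X Y L) i (fun _ => Y) :=
      (congrArg (tup β τ₁) hAY).symm
    have hBX' : tup β τ₁ (L1 X Y L') = tupMV β τ₁ (L1 X Y L) i (fun _ => X) :=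
      (congrArg (tup β τ₁) hAX).symm
    have hσ₂ : tup β σ₂ (L2 X Y L) = tup β σ₂ (L2 X Y L') :=
      (congrArg (tup β σ₂) hL2).symm
    have hτ₂γ : tup γ τ₂ (L2 X Y L') = tup γ τ₂ (L2 X Y L) :=
      congrArg (tup γ τ₂) hL2
    have c1 : mor1 α β γ σ₁ τ₁ σ₂ τ₂ hLM f =
        eqToHom rfl ≫ (y ≫ tupMVHom α σ₁ (L1 X Y L) i (fun s => bif s then X else Y)
          (fun _ => Y) (𝟙 Y) f) ≫ eqToHom hBY :=
      powcat_conj rfl hBY _ _ (fun j => by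
        rw [mor1_eq hLM f j]
        exact coreA1 X Y f _ _ (keqy j) (fun hj hα => FA1 j hj hα)
          (fun hj hα => ⟨FA0 j hj hα, by rw [hj]; exact hLt⟩))
    have c2 : mor2 α β γ σ₁ τ₁ σ₂ τ₂ hLM f =
        eqToHom hBY' ≫ (tupMVHom β τ₁ (L1 X Y L) i (fun _ => Y)
          (fun s => bif s then Y else X) f (𝟙 Y) ≫ z) ≫ eqToHom rfl :=
      powcat_conj hBY' rfl _ _ (fun j => by
        rw [mor2_eq hLM f j]
        exact coreA2 X Y f _ _ _ _ _ _ (keqz j)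
          (fun hj hβ => ⟨FB0 j hj hβ, by rw [hj]; exact hLt⟩)
          (fun hj hβ => FB1 j hj hβ))
    have c3 : mor1 α β γ σ₁ τ₁ σ₂ τ₂ hLM' f =
        eqToHom e₁.symm ≫ (y ≫ tupMVHom α σ₁ (L1 X Y L) i (fun s => bif s then X else Y)
          (fun _ => X) f (𝟙 X)) ≫ eqToHom hBX :=
      powcat_conj e₁.symm hBX _ _ (fun j => by
        rw [mor1_eq hLM' f j]
        exact coreA3 X Y f _ _ _ _ (keqy j)
          (fun hj => ⟨G1 j hj, hL'ne _ hj⟩)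
          (fun hj hα => ⟨by rw [G2 j hj hα]; omega, by rw [hj]; exact hL'i⟩)
          (fun hj hα => G3 j hj hα))
    have c4 : mor2 α β γ σ₁ τ₁ σ₂ τ₂ hLM' f =
        eqToHom hBX' ≫ (tupMVHom β τ₁ (L1 X Y L) i (fun _ => X)
          (fun s => bif s then Y else X) (𝟙 X) f ≫ z) ≫ eqToHom hσ₂ :=
      powcat_conj hBX' hσ₂ _ _ (fun j => by
        rw [mor2_eq hLM' f j]
        exact coreA4 X Y f _ _ _ _ _ _ _ _ _ _ _ _ (keqz j)
          (fun hj => ⟨G4 j hj, hL'ne _ hj, hL'inr _⟩)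
          (fun hj hβ => G5 j hj hβ)
          (fun hj hβ => ⟨by rw [G6 j hj hβ]; omega, by rw [hj]; exact hL'i, LB0 j hj hβ⟩))
    have c5 : mor3 α β γ σ₁ τ₁ σ₂ τ₂ hLM' f =
        eqToHom hτ₂γ ≫ mor3 α β γ σ₁ τ₁ σ₂ τ₂ hLM f ≫ eqToHom e₂ :=
      powcat_conj hτ₂γ e₂ _ _ (fun j => by
        rw [mor3_eq hLM' f j, mor3_eq hLM f j]
        exact toSignHom_heq (by rw [hL'inr]) (by rw [G7 j, hL'inr])
          (comp3_congr X Y f (G7 j) (hL'inr _) _ _ _ _))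
    have φtrY := Transf.congr' φ hAY
    have φtrX := Transf.congr' φ hAX
    have ψtr := Transf.congr' ψ hL2.symm
    have H := hφ i (L1 X Y L) f
    have H' := reassoc_of% H
    simp only [interp]
    rw [c1, c3, c2, c4, c5, φtrY, φtrX, ψtr]
    simp only [Category.assoc, Functor.map_comp, eqToHom_map, eqToHom_trans,
      eqToHom_trans_assoc, eqToHom_refl, Category.id_comp, Category.comp_id]
    rw [H']
  · -- firing a variable of ψ
    set M' := cgFire α β γ σ₁ τ₁ σ₂ τ₂ M (.inr i) with hM'def
    set L' : CGT n m → Bool := fun s => if s = Sum.inr i then false else L s with hL'def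
    have FB1 : ∀ j, σ₂ j = i → β j = true → M (.inr (.inl j)) = 1 := fun j hj hβ =>
      le_antisymm (hLM.le_one _) (ht (.inr (.inl j)) (by simp [cgOut, hβ, hj]))
    have FB0 : ∀ j, σ₂ j = i → β j = false → M (.inr (.inl j)) ≠ 1 := fun j hj hβ hM => by
      have := hLM.in_label (.inr (.inl j)) (.inr i) hM (by simp [cgIn, hβ, hj])
      simp [this] at hLt
    have FC1 : ∀ j, τ₂ j = i → γ j = false → M (.inr (.inr j)) = 1 := fun j hj hγ =>
      le_antisymm (hLM.le_one _) (ht (.inr (.inr j)) (by simp [cgOut, hγ, hj]))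
    have FC0 : ∀ j, τ₂ j = i → γ j = true → M (.inr (.inr j)) ≠ 1 := fun j hj hγ hM => by
      have := hLM.in_label (.inr (.inr j)) (.inr i) hM (by simp [cgIn, hγ, hj])
      simp [this] at hLt
    have LB1 : ∀ j, σ₂ j = i → β j = true → L (.inl (τ₁ j)) = false := fun j hj hβ =>
      hLM.in_label (.inr (.inl j)) (.inl (τ₁ j)) (FB1 j hj hβ) (by simp [cgIn, hβ])
    have LB0 : ∀ j, σ₂ j = i → β j = false → L (.inl (τ₁ j)) = true := fun j hj hβ => by
      have h0 : M (.inr (.inl j)) = 0 := by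
        have := hLM.le_one (.inr (.inl j)); have := FB0 j hj hβ; omega
      have := hLM.eq_label (.inr (.inl j)) (.inr (σ₂ j)) (.inl (τ₁ j)) h0
        (by simp [cgIn, hβ]) (by simp [cgOut, hβ])
      rw [← this, hj, hLt]
    have G1 : ∀ j, σ₂ j ≠ i → M' (.inr (.inl j)) = M (.inr (.inl j)) := fun j hj => by
      rcases hβ : β j <;>
        simp [hM'def, cgFire, cgOut, cgIn, hβ, hj]
    have G2 : ∀ j, σ₂ j = i → β j = true → M' (.inr (.inl j)) = 0 := fun j hj hβ => by
      simp [hM'def, cgFire, cgOut, cgIn, hβ, hj, FB1 j hj hβ]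
    have G3 : ∀ j, σ₂ j = i → β j = false → M' (.inr (.inl j)) = 1 := fun j hj hβ => by
      have h0 : M (.inr (.inl j)) = 0 := by
        have := hLM.le_one (.inr (.inl j)); have := FB0 j hj hβ; omega
      simp [hM'def, cgFire, cgOut, cgIn, hβ, hj, h0]
    have G4 : ∀ j : Fin wa, M' (.inl j) = M (.inl j) := fun j => by
      rcases hα : α j <;>
        simp [hM'def, cgFire, cgOut, cgIn, hα]
    have G5 : ∀ j, τ₂ j = i → γ j = true → M' (.inr (.inr j)) = 1 := fun j hj hγ => by
      have h0 : M (.inr (.inr j)) = 0 := by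
        have := hLM.le_one (.inr (.inr j)); have := FC0 j hj hγ; omega
      simp [hM'def, cgFire, cgOut, cgIn, hγ, hj, h0]
    have G6 : ∀ j, τ₂ j = i → γ j = false → M' (.inr (.inr j)) = 0 := fun j hj hγ => by
      simp [hM'def, cgFire, cgOut, cgIn, hγ, hj, FC1 j hj hγ]
    have G7 : ∀ j, τ₂ j ≠ i → M' (.inr (.inr j)) = M (.inr (.inr j)) := fun j hj => by
      rcases hγ : γ j <;>
        simp [hM'def, cgFire, cgOut, cgIn, hγ, hj]
    have hL'i : L' (.inr i) = false := by simp [hL'def]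
    have hL'ne : ∀ k, k ≠ i → L' (.inr k) = L (.inr k) := fun k hk => by
      simp [hL'def, hk]
    have hL'inl : ∀ k, L' (.inl k) = L (.inl k) := fun k => by simp [hL'def]
    have hLM' : IsLabelledMarking α β γ σ₁ τ₁ σ₂ τ₂ X Y M' L' := by
      constructor
      · rintro (j | j | j)
        · rw [G4 j]; exact hLM.le_one _
        · by_cases hj : σ₂ j = i
          · rcases hβ : β j
            · rw [G3 j hj hβ]
            · rw [G2 j hj hβ]; omega
          · rw [G1 j hj]; exact hLM.le_one _
        · by_cases hj : τ₂ j = i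
          · rcases hγ : γ j
            · rw [G6 j hj hγ]; omega
            · rw [G5 j hj hγ]
          · rw [G7 j hj]; exact hLM.le_one _
      · rintro (j | j | j) t' hM hin
        · rcases hα : α j
          · rw [cgIn, hα] at hin; simp only [cond_false, Option.some.injEq] at hin
            subst hin
            rw [hL'inl]
            exact hLM.in_label (.inl j) _ (by rw [← G4 j]; exact hM) (by simp [cgIn, hα])
          · rw [cgIn, hα] at hin; simp at hin
        · rw [cgIn] at hin
          rcases hβ : β j
          · rw [hβ] at hin; simp only [cond_false, Option.some.injEq] at hin
            subst hin
            by_cases hj : σ₂ j = i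
            · simp [hL'def, hj]
            · rw [hL'ne _ hj]
              exact hLM.in_label (.inr (.inl j)) _ (by rw [← G1 j hj]; exact hM)
                (by simp [cgIn, hβ])
          · rw [hβ] at hin; simp only [cond_true, Option.some.injEq] at hin
            subst hin
            rw [hL'inl]
            by_cases hj : σ₂ j = i
            · exact LB1 j hj hβ
            · exact hLM.in_label (.inr (.inl j)) _ (by rw [← G1 j hj]; exact hM)
                (by simp [cgIn, hβ])
        · rcases hγ : γ j
          · rw [cgIn, hγ] at hin; simp at hin
          · rw [cgIn, hγ] at hin; simp only [cond_true, Option.some.injEq] at hin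
            subst hin
            by_cases hj : τ₂ j = i
            · simp [hL'def, hj]
            · rw [hL'ne _ hj]
              exact hLM.in_label (.inr (.inr j)) _ (by rw [← G7 j hj]; exact hM)
                (by simp [cgIn, hγ])
      · rintro (j | j | j) t' hM hout
        · rcases hα : α j
          · rw [cgOut, hα] at hout; simp at hout
          · rw [cgOut, hα] at hout; simp only [cond_true, Option.some.injEq] at hout
            subst hout
            rw [hL'inl]
            exact hLM.out_label (.inl j) _ (by rw [← G4 j]; exact hM) (by simp [cgOut, hα])
        · rw [cgOut] at hout
          rcases hβ : β j
          · rw [hβ] at hout; simp only [cond_false, Option.some.injEq] at hout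
            subst hout
            rw [hL'inl]
            by_cases hj : σ₂ j = i
            · exact LB0 j hj hβ
            · exact hLM.out_label (.inr (.inl j)) _ (by rw [← G1 j hj]; exact hM)
                (by simp [cgOut, hβ])
          · rw [hβ] at hout; simp only [cond_true, Option.some.injEq] at hout
            subst hout
            by_cases hj : σ₂ j = i
            · exact absurd hM (by rw [G2 j hj hβ]; omega)
            · rw [hL'ne _ hj]
              exact hLM.out_label (.inr (.inl j)) _ (by rw [← G1 j hj]; exact hM)
                (by simp [cgOut, hβ])
        · rcases hγ : γ j
          · rw [cgOut, hγ] at hout; simp only [cond_false, Option.some.injEq] at hout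
            subst hout
            by_cases hj : τ₂ j = i
            · exact absurd hM (by rw [G6 j hj hγ]; omega)
            · rw [hL'ne _ hj]
              exact hLM.out_label (.inr (.inr j)) _ (by rw [← G7 j hj]; exact hM)
                (by simp [cgOut, hγ])
          · rw [cgOut, hγ] at hout; simp at hout
      · rintro (j | j | j) t' t'' hM hin hout
        · rcases hα : α j
          · rw [cgOut, hα] at hout; simp at hout
          · rw [cgIn, hα] at hin; simp at hin
        · rw [cgIn] at hin; rw [cgOut] at hout
          rcases hβ : β j
          · rw [hβ] at hin hout
            simp only [cond_false, Option.some.injEq] at hin hout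
            subst hin; subst hout
            by_cases hj : σ₂ j = i
            · exact absurd hM (by rw [G3 j hj hβ]; omega)
            · rw [hL'ne _ hj, hL'inl]
              exact hLM.eq_label (.inr (.inl j)) _ _ (by rw [← G1 j hj]; exact hM)
                (by simp [cgIn, hβ]) (by simp [cgOut, hβ])
          · rw [hβ] at hin hout
            simp only [cond_true, Option.some.injEq] at hin hout
            subst hin; subst hout
            by_cases hj : σ₂ j = i
            · rw [hL'inl, hL'def]
              simp only [hj, if_pos rfl]
              exact LB1 j hj hβ
            · rw [hL'inl, hL'ne _ hj]
              exact hLM.eq_label (.inr (.inl j)) _ _ (by rw [← G1 j hj]; exact hM)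
                (by simp [cgIn, hβ]) (by simp [cgOut, hβ])
        · rcases hγ : γ j
          · rw [cgIn, hγ] at hin; simp at hin
          · rw [cgOut, hγ] at hout; simp at hout
    have e₁ : startT α σ₁ M L X Y = startT α σ₁ M' L' X Y := by
      funext j
      refine congrArg (toSign (α j)) ?_
      rw [G4 j, hL'inl]
    have e₂ : endT γ τ₂ M L X Y = endT γ τ₂ M' L' X Y := by
      funext j
      refine congrArg (toSign (γ j)) ?_
      by_cases hj : τ₂ j = i
      · rcases hγ : γ j
        · rw [if_pos (FC1 j hj hγ), if_neg (by rw [G6 j hj hγ]; omega), hj, hL'i]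
          rfl
        · rw [if_neg (FC0 j hj hγ), if_pos (G5 j hj hγ), hj, hLt]
          rfl
      · rw [G7 j hj, hL'ne _ hj]
    refine ⟨hLM', e₁, e₂, ?_⟩
    have hL1 : L1 X Y L' = L1 X Y L := funext fun k => by simp [L1, hL'def]
    have hA2Y : upd (L2 X Y L) i Y = L2 X Y L := funext fun k => by
      by_cases hk : k = i
      · simp [upd, hk, L2, hLt, Lob]
      · simp [upd, hk]
    have hA2X : upd (L2 X Y L) i X = L2 X Y L' := funext fun k => by
      by_cases hk : k = i
      · simp [upd, hk, L2, hL'def, Lob]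
      · simp [upd, hk, L2, hL'def]
    have keqy : ∀ j, σ₂ j = i →
        Lob X Y (L (.inl (τ₁ j))) = (bif β j then X else Y) := fun j hj => by
      rcases hβ : β j
      · rw [LB0 j hj hβ]; rfl
      · rw [LB1 j hj hβ]; rfl
    have keqz : ∀ j, τ₂ j = i →
        (if M (.inr (.inr j)) = 1 then (bif γ j then Y else X)
          else Lob X Y (L (.inr (τ₂ j)))) = (bif γ j then Y else X) := fun j hj => by
      rcases hγ : γ j
      · rw [if_pos (FC1 j hj hγ)]
      · rw [if_neg (FC0 j hj hγ), hj, hLt]; rfl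
    let y : tup β τ₁ (L1 X Y L) ⟶ tupMV β σ₂ (L2 X Y L) i (fun s => bif s then X else Y) :=
      fun j => toSignHom (yc₂ X Y f (M (.inr (.inl j))) (L (.inl (τ₁ j))) (L (.inr (σ₂ j)))
        (β j) (σ₂ j = i)
        (fun hM hβ => hLM.in_label _ _ hM (by simp [cgIn, hβ]))
        (fun hM hβ => hLM.out_label _ _ hM (by simp [cgOut, hβ]))
        (fun hM hβ => hLM.in_label _ _ hM (by simp [cgIn, hβ]))
        (fun hM hβ => hLM.out_label _ _ hM (by simp [cgOut, hβ]))
        (fun hM hβ => hLM.eq_label (.inr (.inl j)) _ _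
          (by have := hLM.le_one (.inr (.inl j)); omega)
          (by simp [cgIn, hβ]) (by simp [cgOut, hβ]))
        (fun hM hβ => hLM.eq_label (.inr (.inl j)) _ _
          (by have := hLM.le_one (.inr (.inl j)); omega)
          (by simp [cgIn, hβ]) (by simp [cgOut, hβ]))
        (keqy j))
    let z : tupMV γ τ₂ (L2 X Y L) i (fun s => bif s then Y else X) ⟶ endT γ τ₂ M L X Y :=
      fun j => toSignHom (z₃c X Y f (M (.inr (.inr j))) (L (.inr (τ₂ j))) (γ j) (τ₂ j = i)
        (fun hM hγ => hLM.out_label _ _ hM (by simp [cgOut, hγ]))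
        (fun hM hγ => hLM.in_label _ _ hM (by simp [cgIn, hγ]))
        (keqz j))
    have hCY : tupMV β σ₂ (L2 X Y L) i (fun _ => Y) = tup β σ₂ (L2 X Y L) :=
      congrArg (tup β σ₂) hA2Y
    have hCX : tupMV β σ₂ (L2 X Y L) i (fun _ => X) = tup β σ₂ (L2 X Y L') :=
      congrArg (tup β σ₂) hA2X
    have hDY : tup γ τ₂ (L2 X Y L) = tupMV γ τ₂ (L2 X Y L) i (fun _ => Y) :=
      (congrArg (tup γ τ₂) hA2Y).symm
    have hDX : tup γ τ₂ (L2 X Y L') = tupMV γ τ₂ (L2 X Y L) i (fun _ => X) :=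
      (congrArg (tup γ τ₂) hA2X).symm
    have hσ₁L : tup α σ₁ (L1 X Y L) = tup α σ₁ (L1 X Y L') :=
      (congrArg (tup α σ₁) hL1).symm
    have hτ₁L : tup β τ₁ (L1 X Y L') = tup β τ₁ (L1 X Y L) :=
      congrArg (tup β τ₁) hL1
    have c1 : mor1 α β γ σ₁ τ₁ σ₂ τ₂ hLM' f =
        eqToHom e₁.symm ≫ mor1 α β γ σ₁ τ₁ σ₂ τ₂ hLM f ≫ eqToHom hσ₁L :=
      powcat_conj e₁.symm hσ₁L _ _ (fun j => by
        rw [mor1_eq hLM' f j, mor1_eq hLM f j]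
        exact toSignHom_heq (by rw [G4 j, hL'inl]) (by rw [hL'inl])
          (comp1_congr X Y f (G4 j) (hL'inl _) _ _ _ _))
    have c2 : mor2 α β γ σ₁ τ₁ σ₂ τ₂ hLM f =
        eqToHom rfl ≫ (y ≫ tupMVHom β σ₂ (L2 X Y L) i (fun s => bif s then X else Y)
          (fun _ => Y) (𝟙 Y) f) ≫ eqToHom hCY :=
      powcat_conj rfl hCY _ _ (fun j => by
        rw [mor2_eq hLM f j]
        exact coreB2 X Y f _ _ _ _ _ _ (keqy j)
          (fun hj hβ => FB1 j hj hβ)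
          (fun hj hβ => ⟨FB0 j hj hβ, by rw [hj]; exact hLt⟩))
    have c3 : mor2 α β γ σ₁ τ₁ σ₂ τ₂ hLM' f =
        eqToHom hτ₁L ≫ (y ≫ tupMVHom β σ₂ (L2 X Y L) i (fun s => bif s then X else Y)
          (fun _ => X) f (𝟙 X)) ≫ eqToHom hCX :=
      powcat_conj hτ₁L hCX _ _ (fun j => by
        rw [mor2_eq hLM' f j]
        exact coreB3 X Y f _ _ _ _ _ _ _ _ _ _ _ _ (keqy j) (hL'inl _)
          (fun hj => ⟨G1 j hj, hL'ne _ hj⟩)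
          (fun hj hβ => ⟨by rw [G2 j hj hβ]; omega, LB1 j hj hβ, by rw [hj]; exact hL'i⟩)
          (fun hj hβ => G3 j hj hβ))
    have c4 : mor3 α β γ σ₁ τ₁ σ₂ τ₂ hLM f =
        eqToHom hDY ≫ (tupMVHom γ τ₂ (L2 X Y L) i (fun _ => Y)
          (fun s => bif s then Y else X) f (𝟙 Y) ≫ z) ≫ eqToHom rfl :=
      powcat_conj hDY rfl _ _ (fun j => by
        rw [mor3_eq hLM f j]
        exact coreB4 X Y f _ _ (keqz j)
          (fun hj hγ => ⟨FC0 j hj hγ, by rw [hj]; exact hLt⟩)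
          (fun hj hγ => FC1 j hj hγ))
    have c5 : mor3 α β γ σ₁ τ₁ σ₂ τ₂ hLM' f =
        eqToHom hDX ≫ (tupMVHom γ τ₂ (L2 X Y L) i (fun _ => X)
          (fun s => bif s then Y else X) (𝟙 X) f ≫ z) ≫ eqToHom e₂ :=
      powcat_conj hDX e₂ _ _ (fun j => by
        rw [mor3_eq hLM' f j]
        exact coreB5 X Y f _ _ _ _ (keqz j)
          (fun hj => ⟨G7 j hj, hL'ne _ hj⟩)
          (fun hj hγ => G5 j hj hγ)
          (fun hj hγ => ⟨by rw [G6 j hj hγ]; omega, by rw [hj]; exact hL'i⟩))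
    have φtr := Transf.congr' φ hL1.symm
    have ψtrY := Transf.congr' ψ hA2Y
    have ψtrX := Transf.congr' ψ hA2X
    have H := hψ i (L2 X Y L) f
    have H' := reassoc_of% H
    simp only [interp]
    rw [c1, c2, c3, c4, c5, φtr, ψtrY, ψtrX]
    simp only [Category.assoc, Functor.map_comp, eqToHom_map, eqToHom_trans,
      eqToHom_trans_assoc, eqToHom_refl, Category.id_comp, Category.comp_id]
    rw [H']
end
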